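/- arXiv:math/9810093 — 7 statements merged into one kernel-verified Lean document; each statement's English description precedes it below -/
import Mathlib

section
/- The toppling transformations commute: for all sites i, j in ℤ and all configurations η in {1,2}^ℤ, T_i(T_j(η)) = T_j(T_i(η)). -/
open Filter

noncomputable section

attribute [local instance] Classical.propDecidable

/-- A configuration of the one-dimensional sandpile: heights in `{1,2}`. -/
def IsConfig (η : ℤ → ℤ) : Prop := ∀ x, η x = 1 ∨ η x = 2

/-- The indicator function of site `i`. -/
def e (i : ℤ) : ℤ → ℤ := fun x => if x = i then 1 else 0

/-- `Kp i η = {j ≥ 0 : η (i+j) = 1}`. -/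
def Kp (i : ℤ) (η : ℤ → ℤ) : Set ℕ := {j : ℕ | η (i + (j : ℤ)) = 1}

/-- `Km i η = {j > 0 : η (i−j) = 1}`. -/
def Km (i : ℤ) (η : ℤ → ℤ) : Set ℕ := {j : ℕ | 0 < j ∧ η (i - (j : ℤ)) = 1}

/-- `k⁺(i,η)`, meaningful when `Kp i η` is nonempty (i.e. `k⁺(i,η) < ∞`). -/
noncomputable def kplus (i : ℤ) (η : ℤ → ℤ) : ℕ := sInf (Kp i η)

/-- `k⁻(i,η)`, meaningful when `Km i η` is nonempty (i.e. `k⁻(i,η) < ∞`). -/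
noncomputable def kminus (i : ℤ) (η : ℤ → ℤ) : ℕ := sInf (Km i η)

/-- The toppling transformation `T i`, by the five cases of the paper. -/
noncomputable def T (i : ℤ) (η : ℤ → ℤ) : ℤ → ℤ :=
  if η i = 1 then η + e i
  else if (Kp i η).Nonempty then
    if (Km i η).Nonempty then
      η + e (i + (kplus i η : ℤ)) + e (i - (kminus i η : ℤ))
        - e (i + (kplus i η : ℤ) - (kminus i η : ℤ))
    else η + e (i + (kplus i η : ℤ))
  else if (Km i η).Nonempty then η + e (i - (kminus i η : ℤ))
  else η


/-- `r` is the position of the nearest `1` weakly to the right of `i`. -/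
def Rpt (i : ℤ) (η : ℤ → ℤ) (r : ℤ) : Prop :=
  i ≤ r ∧ η r = 1 ∧ ∀ x, i ≤ x → x < r → η x ≠ 1

/-- `l` is the position of the nearest `1` strictly to the left of `i`. -/
def Lpt (i : ℤ) (η : ℤ → ℤ) (l : ℤ) : Prop :=
  l < i ∧ η l = 1 ∧ ∀ x, l < x → x < i → η x ≠ 1

def NoR (i : ℤ) (η : ℤ → ℤ) : Prop := ∀ x, i ≤ x → η x ≠ 1
def NoL (i : ℤ) (η : ℤ → ℤ) : Prop := ∀ x, x < i → η x ≠ 1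

lemma Kp_ne_of (x : ℤ) (hx : i ≤ x) (h1 : η x = 1) : (Kp i η).Nonempty := by
  refine ⟨(x - i).toNat, ?_⟩
  show η (i + ((x - i).toNat : ℤ)) = 1
  rw [Int.toNat_of_nonneg (by omega)]
  simpa [show i + (x - i) = x by ring] using h1

lemma Km_ne_of (x : ℤ) (hx : x < i) (h1 : η x = 1) : (Km i η).Nonempty := by
  refine ⟨(i - x).toNat, ?_, ?_⟩
  · omega
  · show η (i - ((i - x).toNat : ℤ)) = 1
    rw [Int.toNat_of_nonneg (by omega)]
    simpa [show i - (i - x) = x by ring] using h1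

lemma kplus_spec (h : (Kp i η).Nonempty) : Rpt i η (i + (kplus i η : ℤ)) := by
  have hmem : (kplus i η) ∈ Kp i η := Nat.sInf_mem h
  refine ⟨by omega, hmem, ?_⟩
  intro x hx1 hx2 hx3
  have hx : (x - i).toNat ∉ Kp i η := by
    apply Nat.notMem_of_lt_sInf
    show (x - i).toNat < kplus i η
    omega
  apply hx
  show η (i + ((x - i).toNat : ℤ)) = 1
  rw [Int.toNat_of_nonneg (by omega)]
  simpa [show i + (x - i) = x by ring] using hx3

lemma kminus_spec (h : (Km i η).Nonempty) : Lpt i η (i - (kminus i η : ℤ)) := by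
  have hmem : (kminus i η) ∈ Km i η := Nat.sInf_mem h
  obtain ⟨hpos, hval⟩ := hmem
  refine ⟨by omega, hval, ?_⟩
  intro x hx1 hx2 hx3
  have hx : (i - x).toNat ∉ Km i η := by
    apply Nat.notMem_of_lt_sInf
    show (i - x).toNat < kminus i η
    omega
  apply hx
  refine ⟨by omega, ?_⟩
  show η (i - ((i - x).toNat : ℤ)) = 1
  rw [Int.toNat_of_nonneg (by omega)]
  simpa [show i - (i - x) = x by ring] using hx3

lemma NoR_of_not (h : ¬ (Kp i η).Nonempty) : NoR i η :=
  fun x hx h1 => h (Kp_ne_of x hx h1)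

lemma NoL_of_not (h : ¬ (Km i η).Nonempty) : NoL i η :=
  fun x hx h1 => h (Km_ne_of x hx h1)

lemma Rpt_unique (h : Rpt i η r) (h' : Rpt i η r') : r = r' := by
  rcases lt_trichotomy r r' with hc | hc | hc
  · exact absurd h.2.1 (h'.2.2 r h.1 hc)
  · exact hc
  · exact absurd h'.2.1 (h.2.2 r' h'.1 hc)

lemma Lpt_unique (h : Lpt i η l) (h' : Lpt i η l') : l = l' := by
  rcases lt_trichotomy l l' with hc | hc | hc
  · exact absurd h'.2.1 (h.2.2 l' hc h'.1)
  · exact hc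
  · exact absurd h.2.1 (h'.2.2 l hc h.1)

lemma Rpt_kplus (h : Rpt i η r) : (Kp i η).Nonempty ∧ i + (kplus i η : ℤ) = r := by
  have hne : (Kp i η).Nonempty := Kp_ne_of r h.1 h.2.1
  exact ⟨hne, Rpt_unique (kplus_spec hne) h⟩

lemma Lpt_kminus (h : Lpt i η l) : (Km i η).Nonempty ∧ i - (kminus i η : ℤ) = l := by
  have hne : (Km i η).Nonempty := Km_ne_of l h.1 h.2.1
  exact ⟨hne, Lpt_unique (kminus_spec hne) h⟩

lemma NoR_Kp (h : NoR i η) : ¬ (Kp i η).Nonempty := by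
  rintro ⟨n, hn⟩
  exact h (i + n) (by omega) hn

lemma NoL_Km (h : NoL i η) : ¬ (Km i η).Nonempty := by
  rintro ⟨n, hn0, hn⟩
  exact h (i - n) (by omega) hn

/-- Evaluation of `T` when `η i = 1`. -/
lemma T_one (h : η i = 1) : ∀ x, T i η x = if x = i then 2 else η x := by
  intro x
  rw [T, if_pos h]
  simp only [Pi.add_apply, e]
  rcases eq_or_ne x i with hx | hx
  · subst hx; split_ifs <;> omega
  · split_ifs <;> omega

/-- Evaluation of `T` when `η i = 2` and both pointers exist. -/
lemma T_two_RL (hη : IsConfig η) (h2 : η i = 2) (hR : Rpt i η r) (hL : Lpt i η l) :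
    ∀ x, T i η x = if l ≤ x ∧ x ≤ r then (if x = r + l - i then 1 else 2) else η x := by
  intro x
  obtain ⟨hKp, hkp⟩ := Rpt_kplus hR
  obtain ⟨hKm, hkm⟩ := Lpt_kminus hL
  have hir : i ≠ r := by rintro rfl; rw [hR.2.1] at h2; omega
  have hir' : i < r := lt_of_le_of_ne hR.1 hir
  have hli : l < i := hL.1
  rw [T, if_neg (by omega), if_pos hKp, if_pos hKm]
  simp only [Pi.add_apply, Pi.sub_apply, e, hkp, hkm,
    show i + (kplus i η : ℤ) - (kminus i η : ℤ) = r + l - i by omega]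
  have hcfg := hη x
  have hf1 := hR.2.2 x
  have hf2 := hL.2.2 x
  have hvr := hR.2.1
  have hvl := hL.2.1
  rcases eq_or_ne x r with h | hxr
  · subst h; split_ifs <;> omega
  rcases eq_or_ne x l with h | hxl
  · subst h; split_ifs <;> omega
  rcases eq_or_ne x (r + l - i) with h | hxm
  · subst h; split_ifs <;> omega
  split_ifs <;> omega

/-- Evaluation of `T` when `η i = 2`, right pointer exists, no left pointer. -/
lemma T_two_Ronly (h2 : η i = 2) (hR : Rpt i η r) (hL : NoL i η) :
    ∀ x, T i η x = if x = r then 2 else η x := by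
  intro x
  obtain ⟨hKp, hkp⟩ := Rpt_kplus hR
  rw [T, if_neg (by omega), if_pos hKp, if_neg (NoL_Km hL)]
  simp only [Pi.add_apply, e, hkp]
  have hvr := hR.2.1
  rcases eq_or_ne x r with h | hxr
  · subst h; split_ifs <;> omega
  · split_ifs <;> omega

/-- Evaluation of `T` when `η i = 2`, left pointer exists, no right pointer. -/
lemma T_two_Lonly (h2 : η i = 2) (hR : NoR i η) (hL : Lpt i η l) :
    ∀ x, T i η x = if x = l then 2 else η x := by
  intro x
  obtain ⟨hKm, hkm⟩ := Lpt_kminus hL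
  rw [T, if_neg (by omega), if_neg (NoR_Kp hR), if_pos hKm]
  simp only [Pi.add_apply, e, hkm]
  have hvl := hL.2.1
  rcases eq_or_ne x l with h | hxl
  · subst h; split_ifs <;> omega
  · split_ifs <;> omega

/-- Evaluation of `T` when `η i = 2` and no pointers exist. -/
lemma T_two_none (h2 : η i = 2) (hR : NoR i η) (hL : NoL i η) :
    ∀ x, T i η x = η x := by
  intro x
  rw [T, if_neg (by omega), if_neg (NoR_Kp hR), if_neg (NoL_Km hL)]

lemma IsConfig_T (hη : IsConfig η) (i : ℤ) : IsConfig (T i η) := by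
  intro x
  rcases hη i with h1 | h2
  · rw [T_one h1 x]; split_ifs
    · right; rfl
    · exact hη x
  · rcases em (Kp i η).Nonempty with hR | hR
    · have hRp := kplus_spec hR
      rcases em (Km i η).Nonempty with hL | hL
      · have hLp := kminus_spec hL
        rw [T_two_RL hη h2 hRp hLp x]
        split_ifs
        · left; rfl
        · right; rfl
        · exact hη x
      · rw [T_two_Ronly h2 hRp (NoL_of_not hL) x]
        split_ifs
        · right; rfl
        · exact hη x
    · rcases em (Km i η).Nonempty with hL | hL
      · have hLp := kminus_spec hL
        rw [T_two_Lonly h2 (NoR_of_not hR) hLp x]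
        split_ifs
        · right; rfl
        · exact hη x
      · rw [T_two_none h2 (NoR_of_not hR) (NoL_of_not hL) x]
        exact hη x

/- ## Reflection -/

lemma Kp_reflect (c k : ℤ) (η : ℤ → ℤ) (h : ¬ η (c - k) = 1) :
    Kp k (fun x => η (c - x)) = Km (c - k) η := by
  ext n
  simp only [Kp, Km, Set.mem_setOf_eq]
  constructor
  · intro hn
    have hv : η (c - k - (n : ℤ)) = 1 := by
      rw [show c - k - (n:ℤ) = c - (k + n) by ring]; exact hn
    refine ⟨?_, hv⟩
    rcases Nat.eq_zero_or_pos n with h0 | h0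
    · exfalso; apply h; subst h0; simpa using hv
    · exact h0
  · rintro ⟨h0, hn⟩
    show η (c - (k + (n:ℤ))) = 1
    rw [show c - (k + (n:ℤ)) = c - k - n by ring]; exact hn

lemma Km_reflect (c k : ℤ) (η : ℤ → ℤ) (h : ¬ η (c - k) = 1) :
    Km k (fun x => η (c - x)) = Kp (c - k) η := by
  ext n
  simp only [Kp, Km, Set.mem_setOf_eq]
  constructor
  · rintro ⟨h0, hn⟩
    show η (c - k + (n:ℤ)) = 1
    have : η (c - (k - (n:ℤ))) = 1 := hn
    rw [show c - k + (n:ℤ) = c - (k - n) by ring]; exact this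
  · intro hn
    have hv : η (c - (k - (n:ℤ))) = 1 := by
      rw [show c - (k - (n:ℤ)) = c - k + n by ring]; exact hn
    refine ⟨?_, hv⟩
    rcases Nat.eq_zero_or_pos n with h0 | h0
    · exfalso; apply h; subst h0; simpa using hv
    · exact h0

lemma T_reflect (c k : ℤ) (η : ℤ → ℤ) :
    T k (fun x => η (c - x)) = fun x => T (c - k) η (c - x) := by
  funext x
  by_cases h1 : η (c - k) = 1
  · have hk : (fun x => η (c - x)) k = 1 := h1
    rw [T_one (η := fun x => η (c - x)) (i := k) hk x, T_one h1 (c - x)]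
    split_ifs <;> first | rfl | omega
  · have hk : ¬ (fun x => η (c - x)) k = 1 := h1
    have hK1 : Kp k (fun x => η (c - x)) = Km (c - k) η := Kp_reflect c k η h1
    have hK2 : Km k (fun x => η (c - x)) = Kp (c - k) η := Km_reflect c k η h1
    rw [T, T, if_neg hk, if_neg h1]
    simp only [kplus, kminus, hK1, hK2]
    split_ifs <;>
      simp only [Pi.add_apply, Pi.sub_apply, e] <;>
      split_ifs <;> omega

lemma G_reflect (i j : ℤ) (η : ℤ → ℤ)
    (h : T i (T j (fun x => η (i + j - x))) = T j (T i (fun x => η (i + j - x)))) :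
    T i (T j η) = T j (T i η) := by
  have e1 : T j (fun x => η (i + j - x)) = fun x => T i η (i + j - x) := by
    rw [T_reflect (i+j) j η]
    simp only [show i + j - j = i by ring]
  have e2 : T i (fun x => η (i + j - x)) = fun x => T j η (i + j - x) := by
    rw [T_reflect (i+j) i η]
    simp only [show i + j - i = j by ring]
  rw [e1, e2] at h
  rw [T_reflect (i+j) i (T i η), T_reflect (i+j) j (T j η)] at h
  funext x
  have hx := congrFun h (i + j - x)
  simp only [show i + j - (i + j - x) = x by ring, show i + j - i = j by ring,
    show i + j - j = i by ring] at hx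
  exact hx.symm

lemma Rpt_lt {η : ℤ → ℤ} {i r : ℤ} (h2 : η i = 2) (hR : Rpt i η r) : i < r := by
  rcases eq_or_ne i r with h | h
  · rw [h] at h2; rw [hR.2.1] at h2; omega
  · exact lt_of_le_of_ne hR.1 h

/- ## Case A : both sites at height 1 -/

lemma caseA {η : ℤ → ℤ} {i j : ℤ} (hij : i ≠ j) (h1 : η i = 1) (h2 : η j = 1) :
    T i (T j η) = T j (T i η) := by
  have hTj := T_one h2
  have hTi := T_one h1
  have e1 : T j η i = 1 := by rw [hTj i]; split_ifs <;> omega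
  have e2 : T i η j = 1 := by rw [hTi j]; split_ifs <;> omega
  funext x
  rw [T_one e1 x, hTj x, T_one e2 x, hTi x]
  split_ifs <;> omega

/- ## Case B : η i = 1, η j = 2, i < j -/

lemma caseB {η : ℤ → ℤ} {i j : ℤ} (hη : IsConfig η) (hij : i < j)
    (h1 : η i = 1) (h2 : η j = 2) : T i (T j η) = T j (T i η) := by
  have hTi := T_one h1
  have hj' : T i η j = 2 := by rw [hTi j]; split_ifs <;> omega
  have hKm : (Km j η).Nonempty := Km_ne_of i hij h1
  obtain ⟨l, hLl⟩ : ∃ l, Lpt j η l := ⟨_, kminus_spec hKm⟩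
  have hil : i ≤ l := by
    by_contra hc
    exact hLl.2.2 i (by omega) hij h1
  have hli := hLl.1
  rcases eq_or_ne i l with hieq | hne
  · -- B2 : l = i
    subst hieq
    by_cases hKp : (Kp j η).Nonempty
    · obtain ⟨r, hRr⟩ : ∃ r, Rpt j η r := ⟨_, kplus_spec hKp⟩
      have hjr : j < r := Rpt_lt h2 hRr
      have hTj := T_two_RL hη h2 hRr hLl
      have ei2 : T j η i = 2 := by rw [hTj i]; split_ifs <;> omega
      have hRm : Rpt i (T j η) (r + i - j) := by
        refine ⟨by omega, ?_, ?_⟩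
        · rw [hTj (r + i - j)]; split_ifs <;> omega
        · intro x hx1 hx2; rw [hTj x]; split_ifs <;> omega
      have hR' : Rpt j (T i η) r := by
        refine ⟨hRr.1, ?_, ?_⟩
        · rw [hTi r]; have := hRr.2.1; split_ifs <;> omega
        · intro x hx1 hx2; rw [hTi x]; have := hRr.2.2 x; split_ifs <;> omega
      by_cases hKmi : (Km i η).Nonempty
      · -- B2a
        obtain ⟨l₀, hL0⟩ : ∃ l₀, Lpt i η l₀ := ⟨_, kminus_spec hKmi⟩
        have hl0 := hL0.1
        have hL0' : Lpt i (T j η) l₀ := by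
          refine ⟨hL0.1, ?_, ?_⟩
          · rw [hTj l₀]; have := hL0.2.1; split_ifs <;> omega
          · intro x hx1 hx2; rw [hTj x]; have := hL0.2.2 x; split_ifs <;> omega
        have hTij := T_two_RL (IsConfig_T hη j) ei2 hRm hL0'
        have hL0'' : Lpt j (T i η) l₀ := by
          refine ⟨by omega, ?_, ?_⟩
          · rw [hTi l₀]; have := hL0.2.1; split_ifs <;> omega
          · intro x hx1 hx2; rw [hTi x]
            have := hL0.2.2 x; have := hLl.2.2 x; split_ifs <;> omega
        have hTji := T_two_RL (IsConfig_T hη i) hj' hR' hL0''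
        funext x
        rw [hTij x, hTj x, hTji x, hTi x]
        split_ifs <;> omega
      · -- B2b
        have hNoL0 : NoL i η := NoL_of_not hKmi
        have hNoL' : NoL i (T j η) := by
          intro x hx; rw [hTj x]; have := hNoL0 x hx; split_ifs <;> omega
        have hTij := T_two_Ronly ei2 hRm hNoL'
        have hNoL'' : NoL j (T i η) := by
          intro x hx; rw [hTi x]
          have := hNoL0 x; have := hLl.2.2 x; split_ifs <;> omega
        have hTji := T_two_Ronly hj' hR' hNoL''
        funext x
        rw [hTij x, hTj x, hTji x, hTi x]
        have hcfg := hη x; have hm1 := hLl.2.2 x; have hm2 := hRr.2.2 x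
        split_ifs <;> omega
    · -- no right pointer for j
      have hNoR : NoR j η := NoR_of_not hKp
      have hTj := T_two_Lonly h2 hNoR hLl
      have ei2 : T j η i = 2 := by rw [hTj i]; split_ifs <;> omega
      have hNoRi : NoR i (T j η) := by
        intro x hx; rw [hTj x]
        have := hNoR x; have := hLl.2.2 x; split_ifs <;> omega
      have hNoR' : NoR j (T i η) := by
        intro x hx; rw [hTi x]; have := hNoR x hx; split_ifs <;> omega
      by_cases hKmi : (Km i η).Nonempty
      · -- B2c
        obtain ⟨l₀, hL0⟩ : ∃ l₀, Lpt i η l₀ := ⟨_, kminus_spec hKmi⟩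
        have hl0 := hL0.1
        have hL0' : Lpt i (T j η) l₀ := by
          refine ⟨hL0.1, ?_, ?_⟩
          · rw [hTj l₀]; have := hL0.2.1; split_ifs <;> omega
          · intro x hx1 hx2; rw [hTj x]; have := hL0.2.2 x; split_ifs <;> omega
        have hTij := T_two_Lonly ei2 hNoRi hL0'
        have hL0'' : Lpt j (T i η) l₀ := by
          refine ⟨by omega, ?_, ?_⟩
          · rw [hTi l₀]; have := hL0.2.1; split_ifs <;> omega
          · intro x hx1 hx2; rw [hTi x]
            have := hL0.2.2 x; have := hLl.2.2 x; split_ifs <;> omega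
        have hTji := T_two_Lonly hj' hNoR' hL0''
        funext x
        rw [hTij x, hTj x, hTji x, hTi x]
      · -- B2d
        have hNoL0 : NoL i η := NoL_of_not hKmi
        have hNoLi' : NoL i (T j η) := by
          intro x hx; rw [hTj x]; have := hNoL0 x hx; split_ifs <;> omega
        have hTij := T_two_none ei2 hNoRi hNoLi'
        have hNoL'' : NoL j (T i η) := by
          intro x hx; rw [hTi x]
          have := hNoL0 x; have := hLl.2.2 x; split_ifs <;> omega
        have hTji := T_two_none hj' hNoR' hNoL''
        funext x
        rw [hTij x, hTj x, hTji x, hTi x]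
  · -- B1 : i < l
    have hil' : i < l := lt_of_le_of_ne hil hne
    have hL' : Lpt j (T i η) l := by
      refine ⟨hLl.1, ?_, ?_⟩
      · rw [hTi l]; have := hLl.2.1; split_ifs <;> omega
      · intro x hx1 hx2; rw [hTi x]; have := hLl.2.2 x; split_ifs <;> omega
    by_cases hKp : (Kp j η).Nonempty
    · obtain ⟨r, hRr⟩ : ∃ r, Rpt j η r := ⟨_, kplus_spec hKp⟩
      have hjr : j < r := Rpt_lt h2 hRr
      have hTj := T_two_RL hη h2 hRr hLl
      have ei : T j η i = 1 := by rw [hTj i]; split_ifs <;> omega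
      have hTij := T_one ei
      have hR' : Rpt j (T i η) r := by
        refine ⟨hRr.1, ?_, ?_⟩
        · rw [hTi r]; have := hRr.2.1; split_ifs <;> omega
        · intro x hx1 hx2; rw [hTi x]; have := hRr.2.2 x; split_ifs <;> omega
      have hTji := T_two_RL (IsConfig_T hη i) hj' hR' hL'
      funext x
      rw [hTij x, hTj x, hTji x, hTi x]
      split_ifs <;> omega
    · have hNoR : NoR j η := NoR_of_not hKp
      have hTj := T_two_Lonly h2 hNoR hLl
      have ei : T j η i = 1 := by rw [hTj i]; split_ifs <;> omega
      have hTij := T_one ei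
      have hNoR' : NoR j (T i η) := by
        intro x hx; rw [hTi x]; have := hNoR x hx; split_ifs <;> omega
      have hTji := T_two_Lonly hj' hNoR' hL'
      funext x
      rw [hTij x, hTj x, hTji x, hTi x]
      split_ifs <;> omega

/- ## Case D helpers : η i = η j = 2, same block -/

/-- Same block, both pointers exist, `i` weakly left of the hole `r+l-j`. -/
lemma Dsb {η : ℤ → ℤ} {i j r l : ℤ} (hη : IsConfig η) (hij : i < j)
    (h2i : η i = 2) (h2j : η j = 2)
    (hRi : Rpt i η r) (hRj : Rpt j η r) (hLi : Lpt i η l) (hLj : Lpt j η l)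
    (hle : i ≤ r + l - j) : T i (T j η) = T j (T i η) := by
  have hjr : j < r := Rpt_lt h2j hRj
  have hli : l < i := hLi.1
  have hlj : l < j := hLj.1
  have hTj := T_two_RL hη h2j hRj hLj
  have hTi := T_two_RL hη h2i hRi hLi
  rcases eq_or_ne i (r + l - j) with hb | hne
  · -- i is exactly the hole of the j-toppling
    have ei1 : T j η i = 1 := by rw [hTj i]; split_ifs <;> omega
    have hT1 := T_one ei1
    have ej1 : T i η j = 1 := by rw [hTi j]; split_ifs <;> omega
    have hT2 := T_one ej1
    funext x
    rw [hT1 x, hTj x, hT2 x, hTi x]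
    split_ifs <;> omega
  · have hlt : i < r + l - j := lt_of_le_of_ne hle hne
    have ei2 : T j η i = 2 := by rw [hTj i]; split_ifs <;> omega
    have hRm : Rpt i (T j η) (r + l - j) := by
      refine ⟨by omega, ?_, ?_⟩
      · rw [hTj (r + l - j)]; split_ifs <;> omega
      · intro x hx1 hx2; rw [hTj x]; split_ifs <;> omega
    have ej2 : T i η j = 2 := by rw [hTi j]; split_ifs <;> omega
    have hRm2 : Rpt j (T i η) (r + l - i) := by
      refine ⟨by omega, ?_, ?_⟩
      · rw [hTi (r + l - i)]; split_ifs <;> omega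
      · intro x hx1 hx2; rw [hTi x]; split_ifs <;> omega
    by_cases hKml : (Km l η).Nonempty
    · obtain ⟨l', hL'⟩ : ∃ l', Lpt l η l' := ⟨_, kminus_spec hKml⟩
      have hl'l : l' < l := hL'.1
      have hLl'' : Lpt i (T j η) l' := by
        refine ⟨by omega, ?_, ?_⟩
        · rw [hTj l']; have := hL'.2.1; split_ifs <;> omega
        · intro x hx1 hx2; rw [hTj x]; have := hL'.2.2 x; split_ifs <;> omega
      have hT1 := T_two_RL (IsConfig_T hη j) ei2 hRm hLl''
      have hLl''' : Lpt j (T i η) l' := by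
        refine ⟨by omega, ?_, ?_⟩
        · rw [hTi l']; have := hL'.2.1; split_ifs <;> omega
        · intro x hx1 hx2; rw [hTi x]; have := hL'.2.2 x; split_ifs <;> omega
      have hT2 := T_two_RL (IsConfig_T hη i) ej2 hRm2 hLl'''
      funext x
      rw [hT1 x, hTj x, hT2 x, hTi x]
      split_ifs <;> omega
    · have hNoLl : NoL l η := NoL_of_not hKml
      have hNoL1 : NoL i (T j η) := by
        intro x hx; rw [hTj x]; have := hNoLl x; split_ifs <;> omega
      have hT1 := T_two_Ronly ei2 hRm hNoL1
      have hNoL2 : NoL j (T i η) := by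
        intro x hx; rw [hTi x]; have := hNoLl x; split_ifs <;> omega
      have hT2 := T_two_Ronly ej2 hRm2 hNoL2
      funext x
      rw [hT1 x, hTj x, hT2 x, hTi x]
      split_ifs <;> omega

/-- Same block, right pointer exists, no left pointer. -/
lemma Dronly {η : ℤ → ℤ} {i j r : ℤ} (hη : IsConfig η) (hij : i < j)
    (h2i : η i = 2) (h2j : η j = 2)
    (hRi : Rpt i η r) (hRj : Rpt j η r) (hNoLi : NoL i η) (hNoLj : NoL j η) :
    T i (T j η) = T j (T i η) := by
  have hjr : j < r := Rpt_lt h2j hRj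
  have hTj := T_two_Ronly h2j hRj hNoLj
  have hTi := T_two_Ronly h2i hRi hNoLi
  have ei2 : T j η i = 2 := by rw [hTj i]; split_ifs <;> omega
  have ej2 : T i η j = 2 := by rw [hTi j]; split_ifs <;> omega
  have hNoLi'' : NoL i (T j η) := by
    intro x hx; rw [hTj x]; have := hNoLi x; split_ifs <;> omega
  have hNoLj'' : NoL j (T i η) := by
    intro x hx; rw [hTi x]; have := hNoLj x; split_ifs <;> omega
  by_cases hKp' : (Kp (r + 1) η).Nonempty
  · obtain ⟨r', hR'⟩ : ∃ r', Rpt (r + 1) η r' := ⟨_, kplus_spec hKp'⟩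
    have hrr' : r < r' := by have := hR'.1; omega
    have hRi'' : Rpt i (T j η) r' := by
      refine ⟨by omega, ?_, ?_⟩
      · rw [hTj r']; have := hR'.2.1; split_ifs <;> omega
      · intro x hx1 hx2; rw [hTj x]
        have := hRi.2.2 x; have := hR'.2.2 x; split_ifs <;> omega
    have hT1 := T_two_Ronly ei2 hRi'' hNoLi''
    have hRj'' : Rpt j (T i η) r' := by
      refine ⟨by omega, ?_, ?_⟩
      · rw [hTi r']; have := hR'.2.1; split_ifs <;> omega
      · intro x hx1 hx2; rw [hTi x]
        have := hRj.2.2 x; have := hR'.2.2 x; split_ifs <;> omega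
    have hT2 := T_two_Ronly ej2 hRj'' hNoLj''
    funext x
    rw [hT1 x, hTj x, hT2 x, hTi x]
  · have hNoR' : NoR (r + 1) η := NoR_of_not hKp'
    have hNoRi'' : NoR i (T j η) := by
      intro x hx; rw [hTj x]
      have := hRi.2.2 x; have := hNoR' x; split_ifs <;> omega
    have hT1 := T_two_none ei2 hNoRi'' hNoLi''
    have hNoRj'' : NoR j (T i η) := by
      intro x hx; rw [hTi x]
      have := hRj.2.2 x; have := hNoR' x; split_ifs <;> omega
    have hT2 := T_two_none ej2 hNoRj'' hNoLj''
    funext x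
    rw [hT1 x, hTj x, hT2 x, hTi x]

/- ## Case D : η i = 2, η j = 2, i < j -/

lemma caseD {η : ℤ → ℤ} {i j : ℤ} (hη : IsConfig η) (hij : i < j)
    (h2i : η i = 2) (h2j : η j = 2) : T i (T j η) = T j (T i η) := by
  by_cases hmid : ∃ y, i ≤ y ∧ y < j ∧ η y = 1
  · -- the blocks of i and j are different
    obtain ⟨y, hy1, hy2, hy3⟩ := hmid
    have hKpi : (Kp i η).Nonempty := Kp_ne_of y hy1 hy3
    obtain ⟨ri, hRi⟩ : ∃ r, Rpt i η r := ⟨_, kplus_spec hKpi⟩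
    have hKmj : (Km j η).Nonempty := Km_ne_of y hy2 hy3
    obtain ⟨lj, hLj⟩ : ∃ l, Lpt j η l := ⟨_, kminus_spec hKmj⟩
    have hiri : i < ri := Rpt_lt h2i hRi
    have hljj : lj < j := hLj.1
    have hle : ri ≤ lj := by
      by_contra hc
      have hylj : y ≤ lj := by
        by_contra hc2; exact hLj.2.2 y (by omega) hy2 hy3
      exact hRi.2.2 lj (by omega) (by omega) hLj.2.1
    rcases eq_or_ne ri lj with hadj | hsepne
    · -- adjacent blocks: one separating 1 at ri
      subst hadj
      by_cases hKpj : (Kp j η).Nonempty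
      · obtain ⟨rj, hRj⟩ : ∃ r, Rpt j η r := ⟨_, kplus_spec hKpj⟩
        have hjrj : j < rj := Rpt_lt h2j hRj
        have hTj := T_two_RL hη h2j hRj hLj
        have ei2 : T j η i = 2 := by rw [hTj i]; split_ifs <;> omega
        have hRm : Rpt i (T j η) (rj + ri - j) := by
          refine ⟨by omega, ?_, ?_⟩
          · rw [hTj (rj + ri - j)]; split_ifs <;> omega
          · intro x hx1 hx2; rw [hTj x]; have := hRi.2.2 x; split_ifs <;> omega
        by_cases hKmi : (Km i η).Nonempty
        · -- adjacent, left of i and right of j exist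
          obtain ⟨li, hLi⟩ : ∃ l, Lpt i η l := ⟨_, kminus_spec hKmi⟩
          have hlii : li < i := hLi.1
          have hTi := T_two_RL hη h2i hRi hLi
          have hLi' : Lpt i (T j η) li := by
            refine ⟨hLi.1, ?_, ?_⟩
            · rw [hTj li]; have := hLi.2.1; split_ifs <;> omega
            · intro x hx1 hx2; rw [hTj x]; have := hLi.2.2 x; split_ifs <;> omega
          have hT1 := T_two_RL (IsConfig_T hη j) ei2 hRm hLi'
          have ej2 : T i η j = 2 := by rw [hTi j]; split_ifs <;> omega
          have hRj' : Rpt j (T i η) rj := by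
            refine ⟨hRj.1, ?_, ?_⟩
            · rw [hTi rj]; have := hRj.2.1; split_ifs <;> omega
            · intro x hx1 hx2; rw [hTi x]; have := hRj.2.2 x; split_ifs <;> omega
          have hLm : Lpt j (T i η) (ri + li - i) := by
            refine ⟨by omega, ?_, ?_⟩
            · rw [hTi (ri + li - i)]; split_ifs <;> omega
            · intro x hx1 hx2; rw [hTi x]; have := hLj.2.2 x; split_ifs <;> omega
          have hT2 := T_two_RL (IsConfig_T hη i) ej2 hRj' hLm
          funext x
          rw [hT1 x, hTj x, hT2 x, hTi x]
          split_ifs <;> omega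
        · -- adjacent, no left of i, right of j exists
          have hNoLi : NoL i η := NoL_of_not hKmi
          have hTi := T_two_Ronly h2i hRi hNoLi
          have hNoLi' : NoL i (T j η) := by
            intro x hx; rw [hTj x]; have := hNoLi x; split_ifs <;> omega
          have hT1 := T_two_Ronly ei2 hRm hNoLi'
          have ej2 : T i η j = 2 := by rw [hTi j]; split_ifs <;> omega
          have hRj' : Rpt j (T i η) rj := by
            refine ⟨hRj.1, ?_, ?_⟩
            · rw [hTi rj]; have := hRj.2.1; split_ifs <;> omega
            · intro x hx1 hx2; rw [hTi x]; have := hRj.2.2 x; split_ifs <;> omega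
          have hNoLj' : NoL j (T i η) := by
            intro x hx; rw [hTi x]
            have := hNoLi x; have := hRi.2.2 x; have := hLj.2.2 x
            split_ifs <;> omega
          have hT2 := T_two_Ronly ej2 hRj' hNoLj'
          funext x
          rw [hT1 x, hTj x, hT2 x, hTi x]
          have hcfg := hη x; have := hLj.2.2 x; have := hRj.2.2 x
          split_ifs <;> omega
      · have hNoRj : NoR j η := NoR_of_not hKpj
        have hTj := T_two_Lonly h2j hNoRj hLj
        have ei2 : T j η i = 2 := by rw [hTj i]; split_ifs <;> omega
        have hNoRi' : NoR i (T j η) := by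
          intro x hx; rw [hTj x]
          have := hRi.2.2 x; have := hLj.2.2 x; have := hNoRj x
          split_ifs <;> omega
        by_cases hKmi : (Km i η).Nonempty
        · -- adjacent, left of i exists, no right of j
          obtain ⟨li, hLi⟩ : ∃ l, Lpt i η l := ⟨_, kminus_spec hKmi⟩
          have hlii : li < i := hLi.1
          have hTi := T_two_RL hη h2i hRi hLi
          have hLi' : Lpt i (T j η) li := by
            refine ⟨hLi.1, ?_, ?_⟩
            · rw [hTj li]; have := hLi.2.1; split_ifs <;> omega
            · intro x hx1 hx2; rw [hTj x]; have := hLi.2.2 x; split_ifs <;> omega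
          have hT1 := T_two_Lonly ei2 hNoRi' hLi'
          have ej2 : T i η j = 2 := by rw [hTi j]; split_ifs <;> omega
          have hNoRj' : NoR j (T i η) := by
            intro x hx; rw [hTi x]; have := hNoRj x; split_ifs <;> omega
          have hLm : Lpt j (T i η) (ri + li - i) := by
            refine ⟨by omega, ?_, ?_⟩
            · rw [hTi (ri + li - i)]; split_ifs <;> omega
            · intro x hx1 hx2; rw [hTi x]; have := hLj.2.2 x; split_ifs <;> omega
          have hT2 := T_two_Lonly ej2 hNoRj' hLm
          funext x
          rw [hT1 x, hTj x, hT2 x, hTi x]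
          have hcfg := hη x; have := hLi.2.2 x; have := hRi.2.2 x
          split_ifs <;> omega
        · -- adjacent, neither outer pointer
          have hNoLi : NoL i η := NoL_of_not hKmi
          have hTi := T_two_Ronly h2i hRi hNoLi
          have hNoLi' : NoL i (T j η) := by
            intro x hx; rw [hTj x]; have := hNoLi x; split_ifs <;> omega
          have hT1 := T_two_none ei2 hNoRi' hNoLi'
          have ej2 : T i η j = 2 := by rw [hTi j]; split_ifs <;> omega
          have hNoRj' : NoR j (T i η) := by
            intro x hx; rw [hTi x]; have := hNoRj x; split_ifs <;> omega
          have hNoLj' : NoL j (T i η) := by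
            intro x hx; rw [hTi x]
            have := hNoLi x; have := hRi.2.2 x; have := hLj.2.2 x
            split_ifs <;> omega
          have hT2 := T_two_none ej2 hNoRj' hNoLj'
          funext x
          rw [hT1 x, hTj x, hT2 x, hTi x]
    · -- separated blocks
      have hsep : ri < lj := lt_of_le_of_ne hle hsepne
      by_cases hKpj : (Kp j η).Nonempty
      · obtain ⟨rj, hRj⟩ : ∃ r, Rpt j η r := ⟨_, kplus_spec hKpj⟩
        have hjrj : j < rj := Rpt_lt h2j hRj
        have hTj := T_two_RL hη h2j hRj hLj
        have ei2 : T j η i = 2 := by rw [hTj i]; split_ifs <;> omega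
        have hRi' : Rpt i (T j η) ri := by
          refine ⟨hRi.1, ?_, ?_⟩
          · rw [hTj ri]; have := hRi.2.1; split_ifs <;> omega
          · intro x hx1 hx2; rw [hTj x]; have := hRi.2.2 x; split_ifs <;> omega
        by_cases hKmi : (Km i η).Nonempty
        · obtain ⟨li, hLi⟩ : ∃ l, Lpt i η l := ⟨_, kminus_spec hKmi⟩
          have hlii : li < i := hLi.1
          have hTi := T_two_RL hη h2i hRi hLi
          have hLi' : Lpt i (T j η) li := by
            refine ⟨hLi.1, ?_, ?_⟩
            · rw [hTj li]; have := hLi.2.1; split_ifs <;> omega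
            · intro x hx1 hx2; rw [hTj x]; have := hLi.2.2 x; split_ifs <;> omega
          have hT1 := T_two_RL (IsConfig_T hη j) ei2 hRi' hLi'
          have ej2 : T i η j = 2 := by rw [hTi j]; split_ifs <;> omega
          have hRj' : Rpt j (T i η) rj := by
            refine ⟨hRj.1, ?_, ?_⟩
            · rw [hTi rj]; have := hRj.2.1; split_ifs <;> omega
            · intro x hx1 hx2; rw [hTi x]; have := hRj.2.2 x; split_ifs <;> omega
          have hLj' : Lpt j (T i η) lj := by
            refine ⟨hLj.1, ?_, ?_⟩
            · rw [hTi lj]; have := hLj.2.1; split_ifs <;> omega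
            · intro x hx1 hx2; rw [hTi x]; have := hLj.2.2 x; split_ifs <;> omega
          have hT2 := T_two_RL (IsConfig_T hη i) ej2 hRj' hLj'
          funext x
          rw [hT1 x, hTj x, hT2 x, hTi x]
          split_ifs <;> omega
        · have hNoLi : NoL i η := NoL_of_not hKmi
          have hTi := T_two_Ronly h2i hRi hNoLi
          have hNoLi' : NoL i (T j η) := by
            intro x hx; rw [hTj x]; have := hNoLi x; split_ifs <;> omega
          have hT1 := T_two_Ronly ei2 hRi' hNoLi'
          have ej2 : T i η j = 2 := by rw [hTi j]; split_ifs <;> omega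
          have hRj' : Rpt j (T i η) rj := by
            refine ⟨hRj.1, ?_, ?_⟩
            · rw [hTi rj]; have := hRj.2.1; split_ifs <;> omega
            · intro x hx1 hx2; rw [hTi x]; have := hRj.2.2 x; split_ifs <;> omega
          have hLj' : Lpt j (T i η) lj := by
            refine ⟨hLj.1, ?_, ?_⟩
            · rw [hTi lj]; have := hLj.2.1; split_ifs <;> omega
            · intro x hx1 hx2; rw [hTi x]; have := hLj.2.2 x; split_ifs <;> omega
          have hT2 := T_two_RL (IsConfig_T hη i) ej2 hRj' hLj'
          funext x
          rw [hT1 x, hTj x, hT2 x, hTi x]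
          split_ifs <;> omega
      · have hNoRj : NoR j η := NoR_of_not hKpj
        have hTj := T_two_Lonly h2j hNoRj hLj
        have ei2 : T j η i = 2 := by rw [hTj i]; split_ifs <;> omega
        have hRi' : Rpt i (T j η) ri := by
          refine ⟨hRi.1, ?_, ?_⟩
          · rw [hTj ri]; have := hRi.2.1; split_ifs <;> omega
          · intro x hx1 hx2; rw [hTj x]; have := hRi.2.2 x; split_ifs <;> omega
        by_cases hKmi : (Km i η).Nonempty
        · obtain ⟨li, hLi⟩ : ∃ l, Lpt i η l := ⟨_, kminus_spec hKmi⟩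
          have hlii : li < i := hLi.1
          have hTi := T_two_RL hη h2i hRi hLi
          have hLi' : Lpt i (T j η) li := by
            refine ⟨hLi.1, ?_, ?_⟩
            · rw [hTj li]; have := hLi.2.1; split_ifs <;> omega
            · intro x hx1 hx2; rw [hTj x]; have := hLi.2.2 x; split_ifs <;> omega
          have hT1 := T_two_RL (IsConfig_T hη j) ei2 hRi' hLi'
          have ej2 : T i η j = 2 := by rw [hTi j]; split_ifs <;> omega
          have hNoRj' : NoR j (T i η) := by
            intro x hx; rw [hTi x]; have := hNoRj x; split_ifs <;> omega
          have hLj' : Lpt j (T i η) lj := by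
            refine ⟨hLj.1, ?_, ?_⟩
            · rw [hTi lj]; have := hLj.2.1; split_ifs <;> omega
            · intro x hx1 hx2; rw [hTi x]; have := hLj.2.2 x; split_ifs <;> omega
          have hT2 := T_two_Lonly ej2 hNoRj' hLj'
          funext x
          rw [hT1 x, hTj x, hT2 x, hTi x]
          split_ifs <;> omega
        · have hNoLi : NoL i η := NoL_of_not hKmi
          have hTi := T_two_Ronly h2i hRi hNoLi
          have hNoLi' : NoL i (T j η) := by
            intro x hx; rw [hTj x]; have := hNoLi x; split_ifs <;> omega
          have hT1 := T_two_Ronly ei2 hRi' hNoLi'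
          have ej2 : T i η j = 2 := by rw [hTi j]; split_ifs <;> omega
          have hNoRj' : NoR j (T i η) := by
            intro x hx; rw [hTi x]; have := hNoRj x; split_ifs <;> omega
          have hLj' : Lpt j (T i η) lj := by
            refine ⟨hLj.1, ?_, ?_⟩
            · rw [hTi lj]; have := hLj.2.1; split_ifs <;> omega
            · intro x hx1 hx2; rw [hTi x]; have := hLj.2.2 x; split_ifs <;> omega
          have hT2 := T_two_Lonly ej2 hNoRj' hLj'
          funext x
          rw [hT1 x, hTj x, hT2 x, hTi x]
          split_ifs <;> omega
  · -- same block
    push_neg at hmid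
    by_cases hKpj : (Kp j η).Nonempty
    · obtain ⟨r, hRj⟩ : ∃ r, Rpt j η r := ⟨_, kplus_spec hKpj⟩
      have hjr : j < r := Rpt_lt h2j hRj
      have hRi : Rpt i η r := by
        refine ⟨by omega, hRj.2.1, ?_⟩
        intro x hx1 hx2
        rcases lt_or_ge x j with h | h
        · exact hmid x hx1 h
        · exact hRj.2.2 x h hx2
      by_cases hKmi : (Km i η).Nonempty
      · obtain ⟨l, hLi⟩ : ∃ l, Lpt i η l := ⟨_, kminus_spec hKmi⟩
        have hli : l < i := hLi.1
        have hLj : Lpt j η l := by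
          refine ⟨by omega, hLi.2.1, ?_⟩
          intro x hx1 hx2
          rcases lt_or_ge x i with h | h
          · exact hLi.2.2 x hx1 h
          · exact hmid x h hx2
        rcases le_or_gt i (r + l - j) with hle | hgt
        · exact Dsb hη hij h2i h2j hRi hRj hLi hLj hle
        · apply G_reflect
          refine Dsb (η := fun x => η (i + j - x)) (r := i + j - l) (l := i + j - r)
            (fun x => hη _) hij ?_ ?_ ?_ ?_ ?_ ?_ (by omega)
          · show η (i + j - i) = 2; rw [show i + j - i = j by ring]; exact h2j
          · show η (i + j - j) = 2; rw [show i + j - j = i by ring]; exact h2i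
          · refine ⟨by omega, ?_, ?_⟩
            · show η (i + j - (i + j - l)) = 1
              rw [show i + j - (i + j - l) = l by ring]; exact hLi.2.1
            · intro x hx1 hx2 hcon
              have hcon' : η (i + j - x) = 1 := hcon
              rcases eq_or_ne (i + j - x) j with h | h
              · rw [h] at hcon'; omega
              · rcases lt_or_ge (i + j - x) i with h' | h'
                · exact hLi.2.2 (i + j - x) (by omega) h' hcon'
                · exact hmid (i + j - x) h' (by omega) hcon'
          · refine ⟨by omega, ?_, ?_⟩
            · show η (i + j - (i + j - l)) = 1
              rw [show i + j - (i + j - l) = l by ring]; exact hLi.2.1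
            · intro x hx1 hx2 hcon
              have hcon' : η (i + j - x) = 1 := hcon
              rcases eq_or_ne (i + j - x) i with h | h
              · rw [h] at hcon'; omega
              · exact hLi.2.2 (i + j - x) (by omega) (by omega) hcon'
          · refine ⟨by omega, ?_, ?_⟩
            · show η (i + j - (i + j - r)) = 1
              rw [show i + j - (i + j - r) = r by ring]; exact hRj.2.1
            · intro x hx1 hx2 hcon
              have hcon' : η (i + j - x) = 1 := hcon
              exact hRj.2.2 (i + j - x) (by omega) (by omega) hcon'
          · refine ⟨by omega, ?_, ?_⟩
            · show η (i + j - (i + j - r)) = 1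
              rw [show i + j - (i + j - r) = r by ring]; exact hRj.2.1
            · intro x hx1 hx2 hcon
              have hcon' : η (i + j - x) = 1 := hcon
              exact hRi.2.2 (i + j - x) (by omega) (by omega) hcon'
      · have hNoLi : NoL i η := NoL_of_not hKmi
        have hNoLj : NoL j η := by
          intro x hx
          rcases lt_or_ge x i with h | h
          · exact hNoLi x h
          · exact hmid x h hx
        exact Dronly hη hij h2i h2j hRi hRj hNoLi hNoLj
    · have hNoRj : NoR j η := NoR_of_not hKpj
      have hNoRi : NoR i η := by
        intro x hx
        rcases lt_or_ge x j with h | h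
        · exact hmid x hx h
        · exact hNoRj x h
      by_cases hKmi : (Km i η).Nonempty
      · obtain ⟨l, hLi⟩ : ∃ l, Lpt i η l := ⟨_, kminus_spec hKmi⟩
        have hli : l < i := hLi.1
        apply G_reflect
        refine Dronly (η := fun x => η (i + j - x)) (r := i + j - l)
          (fun x => hη _) hij ?_ ?_ ?_ ?_ ?_ ?_
        · show η (i + j - i) = 2; rw [show i + j - i = j by ring]; exact h2j
        · show η (i + j - j) = 2; rw [show i + j - j = i by ring]; exact h2i
        · refine ⟨by omega, ?_, ?_⟩
          · show η (i + j - (i + j - l)) = 1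
            rw [show i + j - (i + j - l) = l by ring]; exact hLi.2.1
          · intro x hx1 hx2 hcon
            have hcon' : η (i + j - x) = 1 := hcon
            rcases eq_or_ne (i + j - x) j with h | h
            · rw [h] at hcon'; omega
            · rcases lt_or_ge (i + j - x) i with h' | h'
              · exact hLi.2.2 (i + j - x) (by omega) h' hcon'
              · exact hmid (i + j - x) h' (by omega) hcon'
        · refine ⟨by omega, ?_, ?_⟩
          · show η (i + j - (i + j - l)) = 1
            rw [show i + j - (i + j - l) = l by ring]; exact hLi.2.1
          · intro x hx1 hx2 hcon
            have hcon' : η (i + j - x) = 1 := hcon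
            rcases eq_or_ne (i + j - x) i with h | h
            · rw [h] at hcon'; omega
            · exact hLi.2.2 (i + j - x) (by omega) (by omega) hcon'
        · intro x hx hcon
          exact hNoRj (i + j - x) (by omega) hcon
        · intro x hx hcon
          exact hNoRi (i + j - x) (by omega) hcon
      · have hNoLi : NoL i η := NoL_of_not hKmi
        have hNoLj : NoL j η := by
          intro x hx
          rcases lt_or_ge x i with h | h
          · exact hNoLi x h
          · exact hmid x h hx
        have hTj := T_two_none h2j hNoRj hNoLj
        have hTi := T_two_none h2i hNoRi hNoLi
        have ei2 : T j η i = 2 := by rw [hTj i]; exact h2i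
        have ej2 : T i η j = 2 := by rw [hTi j]; exact h2j
        have hNoRi' : NoR i (T j η) := by intro x hx; rw [hTj x]; exact hNoRi x hx
        have hNoLi' : NoL i (T j η) := by intro x hx; rw [hTj x]; exact hNoLi x hx
        have hT1 := T_two_none ei2 hNoRi' hNoLi'
        have hNoRj' : NoR j (T i η) := by intro x hx; rw [hTi x]; exact hNoRj x hx
        have hNoLj' : NoL j (T i η) := by intro x hx; rw [hTi x]; exact hNoLj x hx
        have hT2 := T_two_none ej2 hNoRj' hNoLj'
        funext x
        rw [hT1 x, hTj x, hT2 x, hTi x]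

/-- the toppling transformations commute:
for all sites `i, j ∈ ℤ` and all configurations `η ∈ {1,2}^ℤ`,
`T i (T j η) = T j (T i η)`. -/
theorem toppling_commute (i j : ℤ) (η : ℤ → ℤ) (hη : IsConfig η) :
    T i (T j η) = T j (T i η) := by
  have main : ∀ (i j : ℤ) (η : ℤ → ℤ), IsConfig η → i < j →
      T i (T j η) = T j (T i η) := by
    intro i j η hη hij
    rcases hη i with h1i | h2i <;> rcases hη j with h1j | h2j
    · exact caseA (by omega) h1i h1j
    · exact caseB hη hij h1i h2j
    · apply G_reflect
      apply caseB (fun x => hη _) hij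
      · show η (i + j - i) = 1; rw [show i + j - i = j by ring]; exact h1j
      · show η (i + j - j) = 2; rw [show i + j - j = i by ring]; exact h2i
    · exact caseD hη hij h2i h2j
  rcases lt_trichotomy i j with h | rfl | h
  · exact main i j η hη h
  · rfl
  · exact (main j i η hη h).symm
end
end

section
/- The toppling transformation is monotone: if η, ξ ∈ Ω with η(i)=2, ξ(i^η)=2, and ξ ≤ η pointwise, then T_{φ(i,η,ξ)} ξ ≤ T_i η pointwise, where i^η = i + k⁺(i,η) − k⁻(i,η) and φ(i,η,ξ) = i^η + k⁺(i^η,ξ) − k⁻(i^η,ξ). -/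
/-!
Around a site `i` with `η i = 2`, the configuration `η` has ones at `a = i + k⁺` and `b = i - k⁻`
and twos strictly in between; toppling at `i` moves that `2` to its reflection `j = a + b - i`,
i.e. `T i η = η + e a + e b - e j`. Since `ξ ≤ η`, `ξ` is `1` at `a` and `b`, so the run of twos
of `ξ` around `j` has ends `b ≤ b' < j < a' ≤ a`, and toppling `ξ` at the reflection `φ` of `j`
in that run gives `T φ ξ = ξ + e a' + e b' - e j`. Each unit added at `a'` (resp. `b'`) either
lands at `a` (resp. `b`) as well, or at a site where `ξ` is `1` and `η` is `2`.
-/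

open Filter

noncomputable section

attribute [local instance] Classical.propDecidable

noncomputable def iEta (i : ℤ) (η : ℤ → ℤ) : ℤ :=
  i + (kplus i η : ℤ) - (kminus i η : ℤ)

structure IsTwoRun (η : ℤ → ℤ) (b a : ℤ) : Prop where
  eq_one_left : η b = 1
  eq_one_right : η a = 1
  eq_two : ∀ x, b < x → x < a → η x = 2

namespace IsTwoRun

variable {η : ℤ → ℤ} {b a i : ℤ}

lemma le_of_eq_one (h : IsTwoRun η b a) {x : ℤ} (hbx : b < x) (hx : η x = 1) : a ≤ x := by
  by_contra! hxa
  have := h.eq_two x hbx hxa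
  omega

lemma ge_of_eq_one (h : IsTwoRun η b a) {x : ℤ} (hxa : x < a) (hx : η x = 1) : x ≤ b := by
  by_contra! hbx
  have := h.eq_two x hbx hxa
  omega

lemma isLeast_Kp (h : IsTwoRun η b a) (hbi : b < i) (hia : i ≤ a) :
    IsLeast (Kp i η) (a - i).toNat := by
  have hk : ((a - i).toNat : ℤ) = a - i := Int.toNat_of_nonneg (by omega)
  refine ⟨show η (i + _) = 1 by rw [hk, add_sub_cancel]; exact h.eq_one_right, ?_⟩
  intro t (ht : η (i + t) = 1)
  have := h.le_of_eq_one (by omega) ht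
  omega

lemma isLeast_Km (h : IsTwoRun η b a) (hbi : b < i) (hia : i < a) :
    IsLeast (Km i η) (i - b).toNat := by
  have hk : ((i - b).toNat : ℤ) = i - b := Int.toNat_of_nonneg (by omega)
  refine ⟨⟨by omega, show η (i - _) = 1 by rw [hk, sub_sub_cancel]; exact h.eq_one_left⟩, ?_⟩
  rintro t ⟨-, ht⟩
  have := h.ge_of_eq_one (by omega) ht
  omega

lemma kplus_eq (h : IsTwoRun η b a) (hbi : b < i) (hia : i < a) :
    (kplus i η : ℤ) = a - i := by
  rw [kplus, (h.isLeast_Kp hbi hia.le).csInf_eq, Int.toNat_of_nonneg (by omega)]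

lemma kminus_eq (h : IsTwoRun η b a) (hbi : b < i) (hia : i < a) :
    (kminus i η : ℤ) = i - b := by
  rw [kminus, (h.isLeast_Km hbi hia).csInf_eq, Int.toNat_of_nonneg (by omega)]

lemma iEta_eq (h : IsTwoRun η b a) (hbi : b < i) (hia : i < a) : iEta i η = a + b - i := by
  rw [iEta, h.kplus_eq hbi hia, h.kminus_eq hbi hia]
  ring

lemma T_eq (h : IsTwoRun η b a) (hbi : b < i) (hia : i < a) :
    T i η = η + e a + e b - e (a + b - i) := by
  have hi : η i ≠ 1 := by rw [h.eq_two i hbi hia]; norm_num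
  have ha : i + (kplus i η : ℤ) = a := by rw [h.kplus_eq hbi hia]; ring
  have hb : i - (kminus i η : ℤ) = b := by rw [h.kminus_eq hbi hia]; ring
  have hj : a - (kminus i η : ℤ) = a + b - i := by rw [h.kminus_eq hbi hia]; ring
  rw [T, if_neg hi, if_pos (h.isLeast_Kp hbi hia.le).nonempty,
    if_pos (h.isLeast_Km hbi hia).nonempty, ha, hb, hj]

end IsTwoRun

section Config

variable {η ξ : ℤ → ℤ} {i : ℤ}

lemma lt_add_kplus (hp : (Kp i η).Nonempty) (hi : η i ≠ 1) : i < i + kplus i η := by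
  have h : η (i + kplus i η) = 1 := Nat.sInf_mem hp
  have : kplus i η ≠ 0 := fun h0 => hi (by simpa [h0] using h)
  omega

lemma sub_kminus_lt (hm : (Km i η).Nonempty) : i - kminus i η < i := by
  have : 0 < kminus i η := (Nat.sInf_mem hm).1
  omega

lemma isTwoRun_kminus_kplus (hη : IsConfig η) (hp : (Kp i η).Nonempty)
    (hm : (Km i η).Nonempty) : IsTwoRun η (i - kminus i η) (i + kplus i η) where
  eq_one_left := (Nat.sInf_mem hm).2
  eq_one_right := Nat.sInf_mem hp
  eq_two x hbx hxa := by
    refine (hη x).resolve_left fun hx => ?_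
    rcases le_or_gt i x with hix | hxi
    · have hk : ((x - i).toNat : ℤ) = x - i := Int.toNat_of_nonneg (by omega)
      refine Nat.notMem_of_lt_sInf (show (x - i).toNat < kplus i η by omega) ?_
      show η (i + _) = 1
      rwa [hk, add_sub_cancel]
    · have hk : ((i - x).toNat : ℤ) = i - x := Int.toNat_of_nonneg (by omega)
      refine Nat.notMem_of_lt_sInf (show (i - x).toNat < kminus i η by omega) ⟨by omega, ?_⟩
      rwa [hk, sub_sub_cancel]

lemma eq_one_of_le (hξ : IsConfig ξ) (hle : ∀ x, ξ x ≤ η x) {x : ℤ} (hx : η x = 1) :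
    ξ x = 1 := by
  have := hle x
  rcases hξ x with h | h <;> omega

end Config

lemma add_e_le_add_e {η ξ : ℤ → ℤ} {y z : ℤ} (hle : ∀ x, ξ x ≤ η x) (hy : y = z ∨ ξ y < η y) :
    ∀ x, (ξ + e y) x ≤ (η + e z) x := by
  intro x
  rcases hy with rfl | hy
  · exact add_le_add_left (hle x) _
  · have := hle x
    simp only [Pi.add_apply, e]
    by_cases hxy : x = y
    · subst hxy
      split_ifs <;> omega
    · split_ifs <;> omega

lemma IsTwoRun.add_e_ends_le {η ξ : ℤ → ℤ} {b a b' a' : ℤ} (hrun : IsTwoRun η b a)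
    (hrun' : IsTwoRun ξ b' a') (hle : ∀ x, ξ x ≤ η x) (hbb' : b ≤ b') (hb'a' : b' < a')
    (ha'a : a' ≤ a) : ∀ x, (ξ + e a' + e b') x ≤ (η + e a + e b) x := by
  have hle_a : ∀ x, (ξ + e a') x ≤ (η + e a) x := by
    refine add_e_le_add_e hle (ha'a.eq_or_lt.imp id fun h => ?_)
    rw [hrun'.eq_one_right, hrun.eq_two a' (by omega) h]
    norm_num
  refine add_e_le_add_e hle_a (hbb'.eq_or_lt.imp Eq.symm fun h => ?_)
  simp only [Pi.add_apply, e, if_neg (show b' ≠ a' by omega), if_neg (show b' ≠ a by omega),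
    hrun'.eq_one_left, hrun.eq_two b' h (by omega)]
  norm_num

/-- monotonicity of toppling.  If `η, ξ ∈ Ω` with `η i = 2`, `ξ (i^η) = 2`,
`ξ ≤ η` pointwise (and the relevant `k⁺, k⁻` are finite), then
`T (φ(i,η,ξ)) ξ ≤ T i η` pointwise, where `φ(i,η,ξ) = i^η + k⁺(i^η,ξ) − k⁻(i^η,ξ)`,
i.e. `φ(i,η,ξ) = (i^η)^ξ`. -/
theorem toppling_monotone (i : ℤ) (η ξ : ℤ → ℤ) (hη : IsConfig η) (hξ : IsConfig ξ)
    (hcrit : η i = 2) (hcrit' : ξ (iEta i η) = 2) (hle : ∀ x, ξ x ≤ η x)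
    (hp : (Kp i η).Nonempty) (hm : (Km i η).Nonempty)
    (hp' : (Kp (iEta i η) ξ).Nonempty) (hm' : (Km (iEta i η) ξ).Nonempty) :
    ∀ x, T (iEta (iEta i η) ξ) ξ x ≤ T i η x := by
  set j := iEta i η
  have hrun := isTwoRun_kminus_kplus hη hp hm
  have hrun' := isTwoRun_kminus_kplus hξ hp' hm'
  set a := i + (kplus i η : ℤ)
  set b := i - (kminus i η : ℤ)
  set a' := j + (kplus j ξ : ℤ)
  set b' := j - (kminus j ξ : ℤ)
  have hbi : b < i := sub_kminus_lt hm
  have hia : i < a := lt_add_kplus hp (by omega)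
  have hj : j = a + b - i := hrun.iEta_eq hbi hia
  have hb'j : b' < j := sub_kminus_lt hm'
  have hja' : j < a' := lt_add_kplus hp' (by omega)
  have ha'a : a' ≤ a := hrun'.le_of_eq_one (by omega) (eq_one_of_le hξ hle hrun.eq_one_right)
  have hbb' : b ≤ b' := hrun'.ge_of_eq_one (by omega) (eq_one_of_le hξ hle hrun.eq_one_left)
  have hφ : iEta j ξ = a' + b' - j := hrun'.iEta_eq hb'j hja'
  intro x
  rw [hrun'.T_eq (by omega) (by omega), hφ, show a' + b' - (a' + b' - j) = j by ring,
    hrun.T_eq hbi hia, ← hj]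
  exact sub_le_sub_right (hrun.add_e_ends_le hrun' hle hbb' (by omega) ha'a x) (e j x)
end
end

section
/- For a configuration η ∈ Ω₁ (with infinitely many ones on both sides of the origin), the map i ↦ i^η = i + k⁺(i,η) − k⁻(i,η) from η^{-1}({2}) to ℤ is injective. -/
open Filter

noncomputable section

attribute [local instance] Classical.propDecidable

/-- `Ω₁`: configurations with infinitely many ones to the left and to the right of the
origin. -/
def Omega1 (η : ℤ → ℤ) : Prop :=
  IsConfig η ∧ {i : ℤ | i < 0 ∧ η i = 1}.Infinite ∧ {i : ℤ | 0 < i ∧ η i = 1}.Infinite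

lemma exists_one_ge (η : ℤ → ℤ) (hη : Omega1 η) (i : ℤ) :
    ∃ m, i ≤ m ∧ η m = 1 := by
  obtain ⟨_, _, hR⟩ := hη
  by_contra h
  push_neg at h
  exact hR (Set.Finite.subset (Set.finite_Ioo 0 i)
    (fun m hm => ⟨hm.1, by by_contra hmi; exact h m (by omega) hm.2⟩))

lemma exists_one_lt (η : ℤ → ℤ) (hη : Omega1 η) (i : ℤ) :
    ∃ m, m < i ∧ η m = 1 := by
  obtain ⟨_, hL, _⟩ := hη
  by_contra h
  push_neg at h
  exact hL (Set.Finite.subset (Set.finite_Ico i 0)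
    (fun m hm => ⟨by by_contra hmi; exact h m (by omega) hm.2, hm.1⟩))

lemma Kp_nonempty (η : ℤ → ℤ) (hη : Omega1 η) (i : ℤ) : (Kp i η).Nonempty := by
  obtain ⟨m, him, hm1⟩ := exists_one_ge η hη i
  refine ⟨(m - i).toNat, ?_⟩
  show η (i + ((m - i).toNat : ℤ)) = 1
  rw [Int.toNat_of_nonneg (by omega)]
  simpa using hm1

lemma Km_nonempty (η : ℤ → ℤ) (hη : Omega1 η) (i : ℤ) : (Km i η).Nonempty := by
  obtain ⟨m, him, hm1⟩ := exists_one_lt η hη i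
  refine ⟨(i - m).toNat, ?_, ?_⟩
  · omega
  · show η (i - ((i - m).toNat : ℤ)) = 1
    rw [Int.toNat_of_nonneg (by omega)]
    simpa using hm1

/-- If `η = 2` on `[x, b)` and `η b = 1` then `k⁺(x,η) = b - x`. -/
lemma kplus_eq (η : ℤ → ℤ) {x b : ℤ} (hxb : x < b) (hb : η b = 1)
    (hmid : ∀ y, x ≤ y → y < b → η y = 2) : (kplus x η : ℤ) = b - x := by
  have hmemb : (b - x).toNat ∈ Kp x η := by
    show η (x + ((b - x).toNat : ℤ)) = 1
    rw [Int.toNat_of_nonneg (by omega)]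
    simpa using hb
  have hle : kplus x η ≤ (b - x).toNat := Nat.sInf_le hmemb
  have hmem : η (x + (kplus x η : ℤ)) = 1 := Nat.sInf_mem ⟨_, hmemb⟩
  have hnlt : ¬ ((kplus x η : ℤ) < b - x) := by
    intro h
    have := hmid (x + (kplus x η : ℤ)) (by omega) (by omega)
    omega
  omega

/-- If `η = 2` on `(a, x]` and `η a = 1` then `k⁻(x,η) = x - a`. -/
lemma kminus_eq (η : ℤ → ℤ) {x a : ℤ} (hax : a < x) (ha : η a = 1)
    (hmid : ∀ y, a < y → y ≤ x → η y = 2) : (kminus x η : ℤ) = x - a := by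
  have hmema : (x - a).toNat ∈ Km x η := by
    refine ⟨by omega, ?_⟩
    show η (x - ((x - a).toNat : ℤ)) = 1
    rw [Int.toNat_of_nonneg (by omega)]
    simpa using ha
  have hle : kminus x η ≤ (x - a).toNat := Nat.sInf_le hmema
  have hmem : 0 < kminus x η ∧ η (x - (kminus x η : ℤ)) = 1 := Nat.sInf_mem ⟨_, hmema⟩
  have hnlt : ¬ ((kminus x η : ℤ) < x - a) := by
    intro h
    have := hmid (x - (kminus x η : ℤ)) (by omega) (by omega)
    omega
  omega

/-- Block structure around a critical site. -/
lemma block (η : ℤ → ℤ) (hη : Omega1 η) {i : ℤ} (h2 : η i = 2) :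
    i - (kminus i η : ℤ) < i ∧ i < i + (kplus i η : ℤ) ∧
    η (i - (kminus i η : ℤ)) = 1 ∧ η (i + (kplus i η : ℤ)) = 1 ∧
    (∀ y, i - (kminus i η : ℤ) < y → y < i + (kplus i η : ℤ) → η y = 2) := by
  have hc := hη.1
  have hKp := Kp_nonempty η hη i
  have hKm := Km_nonempty η hη i
  have hmemp : η (i + (kplus i η : ℤ)) = 1 := Nat.sInf_mem hKp
  have hmemm : 0 < kminus i η ∧ η (i - (kminus i η : ℤ)) = 1 := Nat.sInf_mem hKm
  have hkp0 : 0 < kplus i η := by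
    rcases Nat.eq_zero_or_pos (kplus i η) with h | h
    · exfalso; rw [h] at hmemp; simp at hmemp; omega
    · exact h
  refine ⟨by omega, by omega, hmemm.2, hmemp, ?_⟩
  intro y hy1 hy2
  rcases le_or_gt i y with hiy | hiy
  · have hj : (y - i).toNat < kplus i η := by omega
    have := Nat.notMem_of_lt_sInf hj
    have hne : η (i + ((y - i).toNat : ℤ)) ≠ 1 := this
    rw [Int.toNat_of_nonneg (by omega)] at hne
    rcases hc y with h | h
    · exfalso; apply hne; simpa using h
    · exact h
  · have hj : (i - y).toNat < kminus i η := by omega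
    have := Nat.notMem_of_lt_sInf (s := Km i η) hj
    have hne : ¬ (0 < (i - y).toNat ∧ η (i - ((i - y).toNat : ℤ)) = 1) := this
    rw [Int.toNat_of_nonneg (by omega)] at hne
    rcases hc y with h | h
    · exfalso; exact hne ⟨by omega, by simpa using h⟩
    · exact h

/-- for `η ∈ Ω₁`, the map `i ↦ i^η = i + k⁺(i,η) − k⁻(i,η)`, restricted to
the set of critical sites `{i : η i = 2}`, is injective: for each site `j` the avalanche
site `i` with `i^η = j` is unique. -/
theorem iEta_injective (η : ℤ → ℤ) (hη : Omega1 η) :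
    Set.InjOn (fun i => iEta i η) {i : ℤ | η i = 2} := by
  intro i hi i' hi' heq
  simp only [Set.mem_setOf_eq] at hi hi'
  simp only at heq
  obtain ⟨ha_lt, hb_lt, ha1, hb1, hmid⟩ := block η hη hi
  obtain ⟨ha_lt', hb_lt', ha1', hb1', hmid'⟩ := block η hη hi'
  set a := i - (kminus i η : ℤ) with hadef
  set b := i + (kplus i η : ℤ) with hbdef
  set a' := i' - (kminus i' η : ℤ) with hadef'
  set b' := i' + (kplus i' η : ℤ) with hbdef'
  have hj : iEta i η = a + b - i := by simp [iEta]; omega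
  have hj' : iEta i' η = a' + b' - i' := by simp [iEta]; omega
  set j := iEta i η with hjdef
  have hja : a < j ∧ j < b := by omega
  have hja' : a' < j ∧ j < b' := by omega
  have hkp1 : (kplus j η : ℤ) = b - j :=
    kplus_eq η (by omega) hb1 (fun y h1 h2 => hmid y (by omega) h2)
  have hkp2 : (kplus j η : ℤ) = b' - j :=
    kplus_eq η (by omega) hb1' (fun y h1 h2 => hmid' y (by omega) h2)
  have hkm1 : (kminus j η : ℤ) = j - a :=
    kminus_eq η (by omega) ha1 (fun y h1 h2 => hmid y h1 (by omega))
  have hkm2 : (kminus j η : ℤ) = j - a' :=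
    kminus_eq η (by omega) ha1' (fun y h1 h2 => hmid' y h1 (by omega))
  have : a = a' ∧ b = b' := by omega
  omega
end
end

section
/- If f : Ω₁ → ℝ is N-local, then the function Lf(η) = Σ_{i∈ℤ} [f(T_i η) − f(η)] is a well-defined (finite sum) (N+1)-local function on Ω₁. -/
open Filter

noncomputable section

attribute [local instance] Classical.propDecidable

/-- `X : ℤ → ℤ` is the increasing enumeration of `η⁻¹({1})` normalized so that
`X 0 = min {i ≥ 0 : η i = 1}`. -/
def IsEnum (η : ℤ → ℤ) (X : ℤ → ℤ) : Prop :=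
  StrictMono X ∧ (∀ i, η (X i) = 1) ∧ (∀ j, η j = 1 → ∃ i, X i = j) ∧
    0 ≤ X 0 ∧ ∀ j, 0 ≤ j → η j = 1 → X 0 ≤ j

/-- A function `f` on configurations is `N`-local if `f η` depends only on the values of
`η` on `⋃_{j=-N}^{N} I_j(η)`, where `I_j(η) = (X_{j-1}(η), X_j(η)]`.  Since on each
interval `I_j` a configuration equals `2` except for the value `1` at the right endpoint
`X_j`, this is equivalent to saying that `f η` depends only on
`(X_{-N-1}(η), …, X_N(η))`. -/
def IsNLocal (N : ℕ) (f : (ℤ → ℤ) → ℝ) : Prop :=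
  ∀ η ζ Xη Xζ, Omega1 η → Omega1 ζ → IsEnum η Xη → IsEnum ζ Xζ →
    (∀ j : ℤ, -(N : ℤ) - 1 ≤ j → j ≤ (N : ℤ) → Xη j = Xζ j) → f η = f ζ

/-- The formal generator `L f (η) = Σ_{i ∈ ℤ} [f (T_i η) − f η]` (as a `tsum`). -/
noncomputable def Lgen (f : (ℤ → ℤ) → ℝ) : (ℤ → ℤ) → ℝ :=
  fun η => ∑' i : ℤ, (f (T i η) - f η)


/-!
Let `X` enumerate the ones of `η ∈ Ω₁` and let `i ∈ I_k(η) = (X (k - 1), X k]`. Toppling at `i`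
replaces the two ones at `X (k - 1)` and `X k` by a single one at `X (k - 1) + X k - i` (when
`i = X k` this just removes the one at `X k`). So the enumeration of `T i η` is `X` with the
indices `k - 1, k` merged, reindexed by at most one step. If `k` lies outside `[-N - 1, N + 1]`,
the enumeration of `T i η` agrees with `X` on `[-N - 1, N]` and `f (T i η) = f η`: only the
finitely many `i ∈ (X (-N - 2), X (N + 1)]` contribute to `L f`. For those `i`, the enumeration
of `T i η` on `[-N - 1, N]` is determined by `X` on `[-N - 2, N + 1]`, which makes `L f`
`(N + 1)`-local.
-/

open Set Function

theorem StrictMono.exists_mem_Ioc {X : ℤ → ℤ} (hX : StrictMono X) (i : ℤ) :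
    ∃ k, i ∈ Ioc (X (k - 1)) (X k) := by
  have hgrowth : Monotone fun m => X m - m :=
    monotone_int_of_le_succ fun m => by have := hX (lt_add_one m); omega
  have hbdd : ∃ b, ∀ z, i ≤ X z → b ≤ z := ⟨min 0 (i - X 0), fun z hz => by
    by_contra! hz'
    have := hgrowth (show z ≤ 0 by omega)
    simp only at this
    omega⟩
  have hex : ∃ z, i ≤ X z := ⟨max 0 (i - X 0), by
    have := hgrowth (show 0 ≤ max 0 (i - X 0) by omega)
    simp only at this
    omega⟩
  obtain ⟨k, hk, hleast⟩ := Int.exists_least_of_bdd hbdd hex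
  exact ⟨k, lt_of_not_ge fun h => by have := hleast _ h; omega, hk⟩

theorem StrictMono.mem_Ioc_iff {X : ℤ → ℤ} (hX : StrictMono X) {i k a b : ℤ}
    (hi : i ∈ Ioc (X (k - 1)) (X k)) : i ∈ Ioc (X a) (X b) ↔ a < k ∧ k ≤ b := by
  obtain ⟨hik₁, hik₂⟩ := hi
  constructor
  · rintro ⟨hai, hib⟩
    exact ⟨hX.lt_iff_lt.1 (hai.trans_le hik₂), by
      have := hX.lt_iff_lt.1 (hik₁.trans_le hib); omega⟩
  · rintro ⟨hak, hkb⟩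
    exact ⟨(hX.monotone (show a ≤ k - 1 by omega)).trans_lt hik₁, hik₂.trans (hX.monotone hkb)⟩

section Enumeration

variable {η X : ℤ → ℤ}

theorem IsEnum.strictMono (hX : IsEnum η X) : StrictMono X := hX.1

theorem IsEnum.apply_eq_one (hX : IsEnum η X) (m : ℤ) : η (X m) = 1 := hX.2.1 m

theorem IsEnum.exists_eq (hX : IsEnum η X) {x : ℤ} (hx : η x = 1) : ∃ m, X m = x := hX.2.2.1 x hx

theorem IsEnum.apply_zero_nonneg (hX : IsEnum η X) : 0 ≤ X 0 := hX.2.2.2.1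

theorem IsEnum.range_eq (hX : IsEnum η X) : range X = {x | η x = 1} :=
  Subset.antisymm (range_subset_iff.2 hX.apply_eq_one) fun _ hx => hX.exists_eq hx

theorem IsEnum.apply_neg_one_neg (hX : IsEnum η X) : X (-1) < 0 := by
  by_contra! h
  have := hX.2.2.2.2 _ h (hX.apply_eq_one (-1))
  have := hX.strictMono (show (-1 : ℤ) < 0 by norm_num)
  omega

theorem IsEnum.ne_one_of_mem_Ioo (hX : IsEnum η X) {k x : ℤ} (hx : x ∈ Ioo (X (k - 1)) (X k)) :
    η x ≠ 1 := by
  intro h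
  obtain ⟨m, rfl⟩ := hX.exists_eq h
  have := hX.strictMono.lt_iff_lt.1 hx.1
  have := hX.strictMono.lt_iff_lt.1 hx.2
  omega

theorem IsEnum.toNat_mem_Kp (hX : IsEnum η X) {i k : ℤ} (hi : i ∈ Ioc (X (k - 1)) (X k)) :
    (X k - i).toNat ∈ Kp i η := by
  show η (i + ((X k - i).toNat : ℤ)) = 1
  rw [show i + ((X k - i).toNat : ℤ) = X k by have := hi.2; omega]
  exact hX.apply_eq_one k

theorem IsEnum.toNat_mem_Km (hX : IsEnum η X) {i k : ℤ} (hi : i ∈ Ioc (X (k - 1)) (X k)) :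
    (i - X (k - 1)).toNat ∈ Km i η := by
  refine ⟨by have := hi.1; omega, ?_⟩
  rw [show i - ((i - X (k - 1)).toNat : ℤ) = X (k - 1) by have := hi.1; omega]
  exact hX.apply_eq_one (k - 1)

theorem IsEnum.add_kplus (hX : IsEnum η X) {i k : ℤ} (hi : i ∈ Ioc (X (k - 1)) (X k)) :
    i + kplus i η = X k := by
  obtain ⟨hi₁, hi₂⟩ := hi
  have hmin : kplus i η = (X k - i).toNat :=
    le_antisymm (Nat.sInf_le (hX.toNat_mem_Kp ⟨hi₁, hi₂⟩)) <|
      le_csInf ⟨_, hX.toNat_mem_Kp ⟨hi₁, hi₂⟩⟩ fun j hj => not_lt.1 fun hlt =>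
        hX.ne_one_of_mem_Ioo (k := k) ⟨by omega, by omega⟩ hj
  omega

theorem IsEnum.sub_kminus (hX : IsEnum η X) {i k : ℤ} (hi : i ∈ Ioc (X (k - 1)) (X k)) :
    i - kminus i η = X (k - 1) := by
  obtain ⟨hi₁, hi₂⟩ := hi
  have hmin : kminus i η = (i - X (k - 1)).toNat :=
    le_antisymm (Nat.sInf_le (hX.toNat_mem_Km ⟨hi₁, hi₂⟩)) <|
      le_csInf ⟨_, hX.toNat_mem_Km ⟨hi₁, hi₂⟩⟩ fun j hj => not_lt.1 fun hlt =>
        hX.ne_one_of_mem_Ioo (k := k) ⟨by omega, by have := hj.1; omega⟩ hj.2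
  omega

theorem IsEnum.T_eq (hX : IsEnum η X) {i k : ℤ} (hi : i ∈ Ioc (X (k - 1)) (X k)) :
    T i η = η + e (X k) + e (X (k - 1)) - e (X (k - 1) + X k - i) := by
  by_cases h1 : η i = 1
  · obtain ⟨m, rfl⟩ := hX.exists_eq h1
    obtain rfl : m = k := by
      have := hX.strictMono.lt_iff_lt.1 hi.1
      have := hX.strictMono.le_iff_le.1 hi.2
      omega
    rw [T, if_pos h1, add_sub_cancel_right, add_sub_assoc, sub_self, add_zero]
  · rw [T, if_neg h1, if_pos ⟨_, hX.toNat_mem_Kp hi⟩, if_pos ⟨_, hX.toNat_mem_Km hi⟩,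
      hX.add_kplus hi, hX.sub_kminus hi]
    congr 2
    have := hX.sub_kminus hi
    omega

theorem IsEnum.T_apply (hη : IsConfig η) (hX : IsEnum η X) {i k : ℤ}
    (hi : i ∈ Ioc (X (k - 1)) (X k)) (x : ℤ) :
    T i η x = if x = X (k - 1) + X k - i then 1
      else if x = X (k - 1) ∨ x = X k then 2 else η x := by
  obtain ⟨hi₁, hi₂⟩ := hi
  have h₁ := hX.apply_eq_one k
  have h₂ := hX.apply_eq_one (k - 1)
  have hx := hη x
  -- the new one sits at `p ∈ [X (k - 1), X k)`, and strictly inside only on a site of height 2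
  have hp : X (k - 1) + X k - i = X (k - 1) ∨ η (X (k - 1) + X k - i) = 2 := by
    by_cases hik : i = X k
    · left; omega
    · exact .inr <| (hη _).resolve_left <| hX.ne_one_of_mem_Ioo (k := k) ⟨by omega, by omega⟩
  rw [hX.T_eq ⟨hi₁, hi₂⟩]
  simp only [Pi.add_apply, Pi.sub_apply, e]
  split_ifs <;> (try subst x) <;> omega

theorem IsEnum.isConfig_T (hη : IsConfig η) (hX : IsEnum η X) {i k : ℤ}
    (hi : i ∈ Ioc (X (k - 1)) (X k)) : IsConfig (T i η) := fun x => by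
  rw [hX.T_apply hη hi]
  split_ifs
  exacts [.inl rfl, .inr rfl, hη x]

theorem IsEnum.setOf_T_eq_one (hη : IsConfig η) (hX : IsEnum η X) {i k : ℤ}
    (hi : i ∈ Ioc (X (k - 1)) (X k)) :
    {x | T i η x = 1} = insert (X (k - 1) + X k - i) ({x | η x = 1} \ {X (k - 1), X k}) := by
  ext x
  simp only [mem_ofPred_eq, mem_insert_iff, Set.mem_sdiff, mem_singleton_iff,
    hX.T_apply hη hi]
  split_ifs <;> simp_all

end Enumeration

theorem Omega1.of_diff_finite {η ξ : ℤ → ℤ} (hη : Omega1 η) (hξ : IsConfig ξ) {s : Set ℤ}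
    (hs : s.Finite) (h : {x | η x = 1} \ s ⊆ {x | ξ x = 1}) : Omega1 ξ :=
  ⟨hξ, (hη.2.1.sdiff hs).mono fun _ hx => ⟨hx.1.1, h ⟨hx.1.2, hx.2⟩⟩,
    (hη.2.2.sdiff hs).mono fun _ hx => ⟨hx.1.1, h ⟨hx.1.2, hx.2⟩⟩⟩

def mergeEnum (X : ℤ → ℤ) (k p : ℤ) : ℤ → ℤ :=
  fun m => if m < k - 1 then X m else if m = k - 1 then p else X (m + 1)

section mergeEnum

variable {X X' : ℤ → ℤ} {k p m : ℤ}

theorem mergeEnum_of_lt (h : m < k - 1) : mergeEnum X k p m = X m := if_pos h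

theorem mergeEnum_of_le (h : k ≤ m) : mergeEnum X k p m = X (m + 1) := by
  rw [mergeEnum, if_neg (by omega), if_neg (by omega)]

theorem apply_le_mergeEnum (hX : Monotone X) (hp : X (k - 1) ≤ p) : X m ≤ mergeEnum X k p m := by
  unfold mergeEnum
  split_ifs with h₁ h₂
  · rfl
  · exact h₂ ▸ hp
  · exact hX (by omega)

theorem mergeEnum_le_apply (hX : Monotone X) (hp : p ≤ X k) :
    mergeEnum X k p m ≤ X (m + 1) := by
  unfold mergeEnum
  split_ifs with h₁ h₂
  · exact hX (by omega)
  · exact h₂ ▸ (sub_add_cancel k 1).symm ▸ hp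
  · rfl

theorem mergeEnum_strictMono (hX : StrictMono X) (hp : p ∈ Ico (X (k - 1)) (X k)) :
    StrictMono (mergeEnum X k p) := by
  refine strictMono_int_of_lt_succ fun m => ?_
  rcases lt_trichotomy m (k - 1) with h | rfl | h
  · calc mergeEnum X k p m = X m := mergeEnum_of_lt h
      _ < X (m + 1) := hX (lt_add_one m)
      _ ≤ mergeEnum X k p (m + 1) := apply_le_mergeEnum hX.monotone hp.1
  · calc mergeEnum X k p (k - 1) = p := by simp [mergeEnum]
      _ < X (k - 1 + 1 + 1) := hp.2.trans (hX (by omega))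
      _ = mergeEnum X k p (k - 1 + 1) := (mergeEnum_of_le (by omega)).symm
  · rw [mergeEnum_of_le (by omega), mergeEnum_of_le (by omega)]
    exact hX (lt_add_one _)

theorem range_mergeEnum (hX : Injective X) :
    range (mergeEnum X k p) = insert p (range X \ {X (k - 1), X k}) := by
  ext x
  simp only [mem_range, mem_insert_iff, Set.mem_sdiff, mem_singleton_iff]
  constructor
  · rintro ⟨m, rfl⟩
    unfold mergeEnum
    split_ifs with h₁ h₂
    · exact .inr ⟨⟨m, rfl⟩, by simp only [hX.eq_iff]; omega⟩
    · exact .inl rfl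
    · exact .inr ⟨⟨m + 1, rfl⟩, by simp only [hX.eq_iff]; omega⟩
  · rintro (rfl | ⟨⟨m, rfl⟩, hm⟩)
    · exact ⟨k - 1, by simp [mergeEnum]⟩
    · simp only [hX.eq_iff] at hm
      rcases lt_or_gt_of_ne (show m ≠ k - 1 by omega) with h | h
      · exact ⟨m, mergeEnum_of_lt h⟩
      · exact ⟨m - 1, by rw [mergeEnum_of_le (by omega), sub_add_cancel]⟩

theorem mergeEnum_eqOn {a b : ℤ} (h : EqOn X X' (Icc a b)) :
    EqOn (mergeEnum X k p) (mergeEnum X' k p) (Icc a (b - 1)) := by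
  rintro m ⟨hma, hmb⟩
  unfold mergeEnum
  split_ifs
  · exact h ⟨hma, by omega⟩
  · rfl
  · exact h ⟨by omega, by omega⟩

end mergeEnum

/-- Reindexing of an increasing sequence with `Y (-2) < 0 ≤ Y 0` that puts its first
nonnegative term at index `0`. -/
def normalizeEnum (Y : ℤ → ℤ) : ℤ → ℤ :=
  fun m => Y (m + if 0 ≤ Y (-1) then -1 else 0)

section normalizeEnum

variable {Y Y' : ℤ → ℤ}

theorem normalizeEnum_of_neg (h : Y (-1) < 0) : normalizeEnum Y = Y := by
  ext m
  simp [normalizeEnum, not_le.2 h]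

theorem normalizeEnum_of_nonneg (h : 0 ≤ Y (-1)) (m : ℤ) : normalizeEnum Y m = Y (m - 1) := by
  simp [normalizeEnum, h, sub_eq_add_neg]

theorem normalizeEnum_eqOn {a b : ℤ} (h : EqOn Y Y' (Icc a b)) (ha : a ≤ -1) (hb : -1 ≤ b) :
    EqOn (normalizeEnum Y) (normalizeEnum Y') (Icc (a + 1) b) := by
  rintro m ⟨hma, hmb⟩
  have hY : Y (-1) = Y' (-1) := h ⟨ha, hb⟩
  unfold normalizeEnum
  rw [← hY]
  split_ifs
  · exact h ⟨by omega, by omega⟩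
  · exact h ⟨by omega, by omega⟩

theorem isEnum_of_range_eq {ξ : ℤ → ℤ} (hY : StrictMono Y) (hrange : range Y = {x | ξ x = 1})
    (h₀ : 0 ≤ Y 0) (h₁ : Y (-1) < 0) : IsEnum ξ Y := by
  refine ⟨hY, fun m => hrange.subset ⟨m, rfl⟩, fun j hj => hrange.symm.subset hj, h₀, ?_⟩
  intro j hj hj₁
  obtain ⟨m, rfl⟩ := hrange.symm.subset hj₁
  exact hY.monotone <| not_lt.1 fun hm => by
    have := hY.monotone (show m ≤ -1 by omega)
    omega

theorem isEnum_normalizeEnum {ξ : ℤ → ℤ} (hY : StrictMono Y) (hrange : range Y = {x | ξ x = 1})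
    (h₀ : 0 ≤ Y 0) (h₂ : Y (-2) < 0) : IsEnum ξ (normalizeEnum Y) := by
  by_cases h₁ : 0 ≤ Y (-1)
  · have hshift : normalizeEnum Y = Y ∘ fun m => m - 1 := funext (normalizeEnum_of_nonneg h₁)
    rw [hshift]
    refine isEnum_of_range_eq (hY.comp fun _ _ h => by omega) ?_ h₁ h₂
    rw [Surjective.range_comp (fun m => ⟨m + 1, add_sub_cancel_right m 1⟩), hrange]
  · rw [normalizeEnum_of_neg (not_le.1 h₁)]
    exact isEnum_of_range_eq hY hrange h₀ (not_le.1 h₁)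

end normalizeEnum

def toppledEnum (X : ℤ → ℤ) (k i : ℤ) : ℤ → ℤ :=
  normalizeEnum (mergeEnum X k (X (k - 1) + X k - i))

section toppledEnum

variable {η X X' : ℤ → ℤ} {i k : ℤ}

theorem IsEnum.omega1_T (hη : Omega1 η) (hX : IsEnum η X) (hi : i ∈ Ioc (X (k - 1)) (X k)) :
    Omega1 (T i η) :=
  hη.of_diff_finite (hX.isConfig_T hη.1 hi) (toFinite {X (k - 1), X k})
    ((subset_insert _ _).trans (hX.setOf_T_eq_one hη.1 hi).symm.subset)

theorem IsEnum.isEnum_T (hη : IsConfig η) (hX : IsEnum η X) (hi : i ∈ Ioc (X (k - 1)) (X k)) :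
    IsEnum (T i η) (toppledEnum X k i) := by
  have hp : X (k - 1) + X k - i ∈ Ico (X (k - 1)) (X k) := by
    obtain ⟨hi₁, hi₂⟩ := hi
    constructor <;> omega
  refine isEnum_normalizeEnum (mergeEnum_strictMono hX.strictMono hp) ?_
    (hX.apply_zero_nonneg.trans (apply_le_mergeEnum hX.strictMono.monotone hp.1))
    ((mergeEnum_le_apply hX.strictMono.monotone hp.2.le).trans_lt hX.apply_neg_one_neg)
  rw [range_mergeEnum hX.strictMono.injective, hX.range_eq, hX.setOf_T_eq_one hη hi]

theorem toppledEnum_eqOn {a b : ℤ} (h : EqOn X X' (Icc a b)) (hk : k ∈ Ioc a b) (ha : a ≤ -1)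
    (hb : 0 ≤ b) : EqOn (toppledEnum X k i) (toppledEnum X' k i) (Icc (a + 1) (b - 1)) := by
  obtain ⟨hak, hkb⟩ := hk
  unfold toppledEnum
  rw [h ⟨by omega, by omega⟩, h ⟨by omega, hkb⟩]
  exact normalizeEnum_eqOn (mergeEnum_eqOn h) ha (by omega)

theorem toppledEnum_eqOn_of_le (hk : k ≤ -1) (h₀ : 0 ≤ X 0) :
    EqOn (toppledEnum X k i) X (Ioi k) := by
  have hY : mergeEnum X k (X (k - 1) + X k - i) (-1) = X 0 := mergeEnum_of_le hk
  intro m hm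
  rw [toppledEnum, normalizeEnum_of_nonneg (hY ▸ h₀), mergeEnum_of_le (by have := mem_Ioi.1 hm; omega),
    sub_add_cancel]

theorem toppledEnum_eqOn_of_ge (hk : 1 ≤ k) (h₁ : X (-1) < 0) :
    EqOn (toppledEnum X k i) X (Iio (k - 1)) := by
  have hY : mergeEnum X k (X (k - 1) + X k - i) (-1) = X (-1) := mergeEnum_of_lt (by omega)
  intro m hm
  rw [toppledEnum, normalizeEnum_of_neg (hY ▸ h₁), mergeEnum_of_lt hm]

end toppledEnum

section Locality

variable {N : ℕ} {f : (ℤ → ℤ) → ℝ} {η ζ X Xη Xζ : ℤ → ℤ} {i : ℤ}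

theorem IsNLocal.apply_eq_of_eqOn (hf : IsNLocal N f) (hη : Omega1 η) (hζ : Omega1 ζ)
    (hXη : IsEnum η Xη) (hXζ : IsEnum ζ Xζ) (h : EqOn Xη Xζ (Icc (-N - 1) N)) : f η = f ζ :=
  hf η ζ Xη Xζ hη hζ hXη hXζ fun _ hj₁ hj₂ => h ⟨hj₁, hj₂⟩

theorem IsNLocal.apply_T_eq_of_notMem (hf : IsNLocal N f) (hη : Omega1 η) (hX : IsEnum η X)
    (hi : i ∉ Ioc (X (-N - 2)) (X (N + 1))) : f (T i η) = f η := by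
  obtain ⟨k, hk⟩ := hX.strictMono.exists_mem_Ioc i
  rw [hX.strictMono.mem_Ioc_iff hk, not_and_or, not_lt, not_le] at hi
  refine hf.apply_eq_of_eqOn (hX.omega1_T hη hk) hη (hX.isEnum_T hη.1 hk) hX ?_
  rcases hi with hk' | hk'
  · exact (toppledEnum_eqOn_of_le (by omega) hX.apply_zero_nonneg).mono fun m hm => by
      simp only [mem_Icc, mem_Ioi] at hm ⊢; omega
  · exact (toppledEnum_eqOn_of_ge (by omega) hX.apply_neg_one_neg).mono fun m hm => by
      simp only [mem_Icc, mem_Iio] at hm ⊢; omega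

theorem IsNLocal.apply_T_eq_apply_T (hf : IsNLocal N f) (hη : Omega1 η) (hζ : Omega1 ζ)
    (hXη : IsEnum η Xη) (hXζ : IsEnum ζ Xζ) (h : EqOn Xη Xζ (Icc (-N - 2) (N + 1)))
    (hi : i ∈ Ioc (Xη (-N - 2)) (Xη (N + 1))) : f (T i η) = f (T i ζ) := by
  obtain ⟨k, hk⟩ := hXη.strictMono.exists_mem_Ioc i
  have hkN := (hXη.strictMono.mem_Ioc_iff hk).1 hi
  have hk' : i ∈ Ioc (Xζ (k - 1)) (Xζ k) := by
    rwa [← h ⟨by omega, by omega⟩, ← h ⟨by omega, hkN.2⟩]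
  refine hf.apply_eq_of_eqOn (hXη.omega1_T hη hk) (hXζ.omega1_T hζ hk')
    (hXη.isEnum_T hη.1 hk) (hXζ.isEnum_T hζ.1 hk') ?_
  convert toppledEnum_eqOn h hkN (by omega) (by omega) using 2 <;> ring

end Locality

/-- if `f : Ω₁ → ℝ` is `N`-local, then `L f (η) = Σ_{i∈ℤ} [f (T_i η) − f η]`
is a well-defined sum — for each `η ∈ Ω₁` only finitely many terms are nonzero — and `L f`
is an `(N+1)`-local function on `Ω₁`. -/
theorem Lgen_nLocal (N : ℕ) (f : (ℤ → ℤ) → ℝ) (hf : IsNLocal N f) :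
    (∀ η X, Omega1 η → IsEnum η X →
      (Function.support fun i : ℤ => f (T i η) - f η).Finite) ∧
    IsNLocal (N + 1) (Lgen f) := by
  refine ⟨fun η X hη hX => ?_, fun η ζ Xη Xζ hη hζ hXη hXζ h => ?_⟩
  · refine (finite_Ioc (X (-N - 2)) (X (N + 1))).subset fun i hi => ?_
    by_contra hi'
    exact hi (sub_eq_zero.2 (hf.apply_T_eq_of_notMem hη hX hi'))
  · have h' : EqOn Xη Xζ (Icc (-N - 2) (N + 1)) := fun j hj =>
      h j (by push_cast; linarith [hj.1]) (by push_cast; exact hj.2)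
    have hfηζ : f η = f ζ := hf.apply_eq_of_eqOn hη hζ hXη hXζ
      (h'.mono (Icc_subset_Icc (by omega) (by omega)))
    refine tsum_congr fun i => ?_
    by_cases hi : i ∈ Ioc (Xη (-N - 2)) (Xη (N + 1))
    · rw [hf.apply_T_eq_apply_T hη hζ hXη hXζ h' hi, hfηζ]
    · have hiζ : i ∉ Ioc (Xζ (-N - 2)) (Xζ (N + 1)) := by
        rwa [← h' ⟨le_rfl, by omega⟩, ← h' ⟨by omega, le_rfl⟩]
      rw [hf.apply_T_eq_of_notMem hη hXη hi, hf.apply_T_eq_of_notMem hζ hXζ hiζ, hfηζ]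
end
end

section
/- In the finite-volume sandpile model on [−n,n] with boundary ones, for every ordered pair of distinct recurrent configurations (η,ζ) ∈ 𝓡_n × 𝓡_n there exists a unique site i ∈ [−n,n] ∩ ℤ such that T_{n,i} η = ζ. -/
open Filter

noncomputable section

attribute [local instance] Classical.propDecidable

/-- `[η]^n`: reset all coordinates outside `[-n,n]` to `1`. -/
def restrictN (n : ℕ) (η : ℤ → ℤ) : ℤ → ℤ :=
  fun x => if -(n : ℤ) ≤ x ∧ x ≤ (n : ℤ) then η x else 1

/-- The finite-volume toppling `T_{n,i} η = [T_i η^n]^n`. -/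
noncomputable def Tn (n : ℕ) (i : ℤ) (η : ℤ → ℤ) : ℤ → ℤ :=
  restrictN n (T i (restrictN n η))

/-- The recurrent configurations of the finite-volume sandpile on `[-n,n]`:
elements of `Ω_{f,n}` with `Σ_{i=-n}^n (2 − η i) ≤ 1`, i.e. at most one site in `[-n,n]`
with height `1`. -/
def Rec (n : ℕ) (η : ℤ → ℤ) : Prop :=
  IsConfig η ∧ (∀ j : ℤ, ¬(-(n : ℤ) ≤ j ∧ j ≤ (n : ℤ)) → η j = 1) ∧
    (∑ i ∈ Finset.Icc (-(n : ℤ)) (n : ℤ), (2 - η i)) ≤ 1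

/-!
A recurrent configuration has at most one height-one site in `[-n, n]`; write `recConfig n b` for
the one whose height-one site is `b`, where `b = -(n+1)` encodes the all-twos configuration.
Toppling at `i` between the nearest ones `l < i < r` moves the height-one site to `l + r - i`;
in terms of the label `b + n + 1 ∈ ℤ/(2n+2)` this is the rotation by `-(i + n + 1)`, and
`i ↦ i + n + 1` maps `[-n, n]` bijectively onto the nonzero residues.
-/

lemma T_of_eq_two {i : ℤ} {η : ℤ → ℤ} {p m : ℕ} (h2 : η i = 2) (hp : IsLeast (Kp i η) p)
    (hm : IsLeast (Km i η) m) :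
    T i η = η + e (i + p) + e (i - m) - e (i + p - m) := by
  rw [T, if_neg (by omega), if_pos ⟨p, hp.1⟩, if_pos ⟨m, hm.1⟩, kplus, kminus, hp.csInf_eq,
    hm.csInf_eq]

def recConfig (n : ℕ) (b : ℤ) : ℤ → ℤ :=
  fun x => if x = b then 1 else if -(n : ℤ) ≤ x ∧ x ≤ n then 2 else 1

lemma restrictN_recConfig (n : ℕ) (b : ℤ) : restrictN n (recConfig n b) = recConfig n b := by
  funext x
  simp only [restrictN, recConfig]
  split_ifs <;> omega

lemma Tn_recConfig_self (n : ℕ) (b : ℤ) : Tn n b (recConfig n b) = recConfig n (-(n + 1)) := by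
  rw [Tn, restrictN_recConfig, T, if_pos (by simp [recConfig])]
  funext x
  simp only [restrictN, recConfig, Pi.add_apply, e]
  split_ifs <;> omega

/-- `l` and `r` are the height-one sites of `recConfig n b` nearest to `i` on either side. -/
lemma Tn_recConfig_of_between {n : ℕ} {b i l r : ℤ} (hli : l < i) (hir : i < r)
    (hl : l = -(n + 1) ∨ l = b) (hr : r = n + 1 ∨ r = b) (hlr : -(n + 1 : ℤ) ≤ l ∧ r ≤ n + 1)
    (hb : ¬(l < b ∧ b < r)) :
    Tn n i (recConfig n b) = recConfig n (l + r - i) := by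
  rw [Tn, restrictN_recConfig, T_of_eq_two (p := (r - i).toNat) (m := (i - l).toNat)]
  · funext x
    simp only [restrictN, recConfig, Pi.add_apply, Pi.sub_apply, e]
    split_ifs <;> omega
  · simp only [recConfig]
    split_ifs <;> omega
  · refine ⟨by simp only [Kp, recConfig, Set.mem_ofPred_eq]; split_ifs <;> omega, fun j hj => ?_⟩
    simp only [Kp, recConfig, Set.mem_ofPred_eq] at hj
    split_ifs at hj <;> omega
  · refine ⟨by simp only [Km, recConfig, Set.mem_ofPred_eq]; split_ifs <;> omega, fun j hj => ?_⟩
    simp only [Km, recConfig, Set.mem_ofPred_eq] at hj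
    split_ifs at hj <;> omega

lemma emod_eq_ite {x m : ℤ} (h₁ : -m ≤ x) (h₂ : x < m) :
    x % m = if 0 ≤ x then x else x + m := by
  split_ifs with hx
  · exact Int.emod_eq_of_lt hx h₂
  · rw [← Int.add_emod_right]
    exact Int.emod_eq_of_lt (by omega) (by omega)

lemma Tn_recConfig {n : ℕ} {b i : ℤ} (hb : b ∈ Set.Icc (-(n + 1 : ℤ)) n)
    (hi : i ∈ Set.Icc (-(n : ℤ)) n) :
    Tn n i (recConfig n b) = recConfig n ((b - i) % (2 * n + 2) - (n + 1)) := by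
  obtain ⟨hb₁, hb₂⟩ := hb
  obtain ⟨hi₁, hi₂⟩ := hi
  rw [emod_eq_ite (by omega) (by omega)]
  rcases lt_trichotomy i b with hib | rfl | hbi
  · rw [if_pos (by omega), Tn_recConfig_of_between (by omega) hib (.inl rfl) (.inr rfl) (by omega)
      (by omega)]
    ring_nf
  · rw [sub_self, if_pos le_rfl, zero_sub, Tn_recConfig_self]
  · rw [if_neg (by omega), Tn_recConfig_of_between hbi (by omega) (.inr rfl) (.inl rfl) (by omega)
      (by omega)]
    ring_nf

lemma recConfig_injOn (n : ℕ) : Set.InjOn (recConfig n) (Set.Icc (-(n + 1 : ℤ)) n) := by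
  intro a ha a' ha' h
  have h₁ := congrFun h a
  have h₂ := congrFun h a'
  simp only [recConfig, Set.mem_Icc] at h₁ h₂ ha ha'
  split_ifs at h₁ h₂ <;> omega

lemma eq_of_rec_of_eq_one {n : ℕ} {η : ℤ → ℤ} (h : Rec n η) {j k : ℤ}
    (hj : j ∈ Finset.Icc (-(n : ℤ)) n) (hk : k ∈ Finset.Icc (-(n : ℤ)) n) (hj₁ : η j = 1)
    (hk₁ : η k = 1) : j = k := by
  by_contra hjk
  obtain ⟨hconf, -, hsum⟩ := h
  have : ∑ x ∈ {j, k}, (2 - η x) ≤ ∑ x ∈ Finset.Icc (-(n : ℤ)) n, (2 - η x) :=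
    Finset.sum_le_sum_of_subset_of_nonneg (Finset.insert_subset hj (Finset.singleton_subset_iff.2 hk))
      fun x _ _ => by rcases hconf x with h | h <;> omega
  rw [Finset.sum_pair hjk] at this
  omega

lemma eq_recConfig_of_forall {n : ℕ} {η : ℤ → ℤ} {b : ℤ} (hconf : IsConfig η)
    (hout : ∀ x : ℤ, ¬(-(n : ℤ) ≤ x ∧ x ≤ n) → η x = 1)
    (hone : ∀ x ∈ Finset.Icc (-(n : ℤ)) n, η x = 1 ↔ x = b) : η = recConfig n b := by
  funext x
  by_cases hx : x ∈ Finset.Icc (-(n : ℤ)) n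
  · have := hone x hx
    rw [Finset.mem_Icc] at hx
    simp only [recConfig]
    split_ifs <;> rcases hconf x with h | h <;> tauto
  · rw [Finset.mem_Icc] at hx
    simp only [recConfig, hout x hx]
    split_ifs <;> rfl

lemma exists_eq_recConfig_of_rec {n : ℕ} {η : ℤ → ℤ} (h : Rec n η) :
    ∃ b ∈ Set.Icc (-(n + 1 : ℤ)) n, η = recConfig n b := by
  by_cases hexists : ∃ b ∈ Finset.Icc (-(n : ℤ)) n, η b = 1
  · obtain ⟨b, hb, hb₁⟩ := hexists
    have hb' := Finset.mem_Icc.1 hb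
    refine ⟨b, ⟨by omega, hb'.2⟩, eq_recConfig_of_forall h.1 h.2.1 fun x hx => ⟨?_, ?_⟩⟩
    · exact fun hx₁ => eq_of_rec_of_eq_one h hx hb hx₁ hb₁
    · rintro rfl
      exact hb₁
  · push Not at hexists
    refine ⟨-(n + 1), ⟨le_rfl, by omega⟩, eq_recConfig_of_forall h.1 h.2.1 fun x hx => ?_⟩
    have := Finset.mem_Icc.1 hx
    exact ⟨fun hx₁ => absurd hx₁ (hexists x hx), by omega⟩

lemma Tn_recConfig_eq_recConfig_iff {n : ℕ} {a b i : ℤ} (ha : a ∈ Set.Icc (-(n + 1 : ℤ)) n)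
    (hb : b ∈ Set.Icc (-(n + 1 : ℤ)) n) (hi : i ∈ Set.Icc (-(n : ℤ)) n) :
    Tn n i (recConfig n b) = recConfig n a ↔ i = (b - a) % (2 * n + 2) - (n + 1) := by
  obtain ⟨ha₁, ha₂⟩ := ha
  obtain ⟨hb₁, hb₂⟩ := hb
  obtain ⟨hi₁, hi₂⟩ := hi
  have hrot : (b - i) % (2 * n + 2) - (n + 1) ∈ Set.Icc (-(n + 1 : ℤ)) n := by
    rw [emod_eq_ite (by omega) (by omega)]
    constructor <;> split_ifs <;> omega
  rw [Tn_recConfig ⟨hb₁, hb₂⟩ ⟨hi₁, hi₂⟩, (recConfig_injOn n).eq_iff hrot ⟨ha₁, ha₂⟩,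
    emod_eq_ite (by omega) (by omega), emod_eq_ite (x := b - a) (by omega) (by omega)]
  split_ifs <;> omega

/-- for every ordered pair of distinct recurrent configurations
`(η, ζ) ∈ 𝓡_n × 𝓡_n` there exists a unique site `i ∈ [-n,n] ∩ ℤ` with `T_{n,i} η = ζ`. -/
theorem unique_toppling_site (n : ℕ) (η ζ : ℤ → ℤ) (hη : Rec n η) (hζ : Rec n ζ)
    (hne : η ≠ ζ) :
    ∃! i : ℤ, i ∈ Finset.Icc (-(n : ℤ)) (n : ℤ) ∧ Tn n i η = ζ := by
  obtain ⟨b, hb, rfl⟩ := exists_eq_recConfig_of_rec hη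
  obtain ⟨a, ha, rfl⟩ := exists_eq_recConfig_of_rec hζ
  have hab : a ≠ b := by
    rintro rfl
    exact hne rfl
  have hsite : (b - a) % (2 * n + 2) - (n + 1) ∈ Set.Icc (-(n : ℤ)) n := by
    obtain ⟨ha₁, ha₂⟩ := ha
    obtain ⟨hb₁, hb₂⟩ := hb
    rw [emod_eq_ite (by omega) (by omega)]
    constructor <;> split_ifs <;> omega
  refine ⟨_, ⟨Finset.mem_Icc.2 hsite, (Tn_recConfig_eq_recConfig_iff ha hb hsite).2 rfl⟩, ?_⟩
  rintro j ⟨hj, hTj⟩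
  exact (Tn_recConfig_eq_recConfig_iff ha hb (Finset.mem_Icc.1 hj)).1 hTj
end
end

section
/- The uniform measure μ_n on the recurrent set 𝓡_n is reversible for the finite-volume sandpile generator 𝓛_n: for all functions f, g on Ω_{f,n}, ∫ (𝓛_n f) g dμ_n = ∫ f (𝓛_n g) dμ_n, where 𝓛_n f(η) = Σ_{i=−n}^n [f(T_{n,i} η) − f(η)]. -/
open Filter

noncomputable section

attribute [local instance] Classical.propDecidable

/-! Auxiliary development -/

def fullC (n : ℕ) : ℤ → ℤ := fun x => if -(n : ℤ) ≤ x ∧ x ≤ (n : ℤ) then 2 else 1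
def oneC (n : ℕ) (a : ℤ) : ℤ → ℤ := fun x => if x = a then 1 else fullC n x

lemma nat_sInf_eq {S : Set ℕ} {k : ℕ} (hk : k ∈ S) (hmin : ∀ m ∈ S, k ≤ m) : sInf S = k :=
  le_antisymm (Nat.sInf_le hk) (hmin _ (Nat.sInf_mem ⟨k, hk⟩))

lemma restrict_full (n : ℕ) : restrictN n (fullC n) = fullC n := by
  funext x; simp only [restrictN, fullC]; split_ifs <;> rfl

lemma restrict_one {n : ℕ} {a : ℤ} (ha1 : -(n : ℤ) ≤ a) (ha2 : a ≤ n) :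
    restrictN n (oneC n a) = oneC n a := by
  funext x; simp only [restrictN, oneC, fullC]; split_ifs <;> omega

lemma rec_full (n : ℕ) : Rec n (fullC n) := by
  refine ⟨fun x => ?_, fun j hj => ?_, ?_⟩
  · simp only [fullC]; split_ifs <;> simp
  · simp only [fullC, if_neg hj]
  · have : ∀ i ∈ Finset.Icc (-(n : ℤ)) (n : ℤ), (2 - fullC n i) = 0 := by
      intro i hi
      rw [Finset.mem_Icc] at hi
      simp only [fullC, if_pos hi]; ring
    rw [Finset.sum_congr rfl this]; simp

lemma rec_one {n : ℕ} {a : ℤ} (ha1 : -(n : ℤ) ≤ a) (ha2 : a ≤ n) : Rec n (oneC n a) := by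
  refine ⟨fun x => ?_, fun j hj => ?_, ?_⟩
  · simp only [oneC, fullC]; split_ifs <;> simp
  · simp only [oneC, fullC, if_neg hj]; rw [if_neg]; omega
  · have : ∀ i ∈ Finset.Icc (-(n : ℤ)) (n : ℤ), (2 - oneC n a i) = if i = a then 1 else 0 := by
      intro i hi
      rw [Finset.mem_Icc] at hi
      simp only [oneC, fullC]; split_ifs <;> omega
    rw [Finset.sum_congr rfl this, Finset.sum_ite_eq' _ a (fun _ => (1:ℤ))]
    split_ifs <;> omega

lemma rec_cases {n : ℕ} {η : ℤ → ℤ} (h : Rec n η) :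
    η = fullC n ∨ ∃ a, (-(n : ℤ) ≤ a ∧ a ≤ n) ∧ η = oneC n a := by
  obtain ⟨hc, hb, hs⟩ := h
  by_cases hall : ∀ x ∈ Finset.Icc (-(n : ℤ)) (n : ℤ), η x = 2
  · left; funext x
    by_cases hx : -(n : ℤ) ≤ x ∧ x ≤ n
    · rw [hall x (Finset.mem_Icc.2 hx)]; simp [fullC, if_pos hx]
    · rw [hb x hx]; simp [fullC, if_neg hx]
  · push_neg at hall
    obtain ⟨a, haI, ha2⟩ := hall
    have ha1 : η a = 1 := (hc a).resolve_right ha2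
    rw [Finset.mem_Icc] at haI
    right; refine ⟨a, haI, ?_⟩
    have huniq : ∀ b, -(n : ℤ) ≤ b → b ≤ n → b ≠ a → η b = 2 := by
      intro b hb1 hb2 hba
      rcases hc b with h1 | h2
      · exfalso
        have hsub : ({a, b} : Finset ℤ) ⊆ Finset.Icc (-(n : ℤ)) (n : ℤ) := by
          intro x hx
          simp only [Finset.mem_insert, Finset.mem_singleton] at hx
          rw [Finset.mem_Icc]; rcases hx with rfl | rfl <;> omega
        have hmono : ∑ i ∈ ({a, b} : Finset ℤ), (2 - η i) ≤
            ∑ i ∈ Finset.Icc (-(n : ℤ)) (n : ℤ), (2 - η i) :=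
          Finset.sum_le_sum_of_subset_of_nonneg hsub
            (fun i _ _ => by rcases hc i with h | h <;> omega)
        rw [Finset.sum_pair (Ne.symm hba)] at hmono
        omega
      · exact h2
    funext x
    by_cases hxa : x = a
    · subst hxa; simp [oneC, ha1]
    · by_cases hx : -(n : ℤ) ≤ x ∧ x ≤ n
      · rw [huniq x hx.1 hx.2 hxa]; simp [oneC, fullC, if_neg hxa, if_pos hx]
      · rw [hb x hx]; simp [oneC, fullC, if_neg hxa, if_neg hx]

lemma Tn_full {n : ℕ} {i : ℤ} (hi1 : -(n : ℤ) ≤ i) (hi2 : i ≤ n) :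
    Tn n i (fullC n) = oneC n (-i) := by
  have hne : ¬ fullC n i = 1 := by simp only [fullC]; rw [if_pos ⟨hi1, hi2⟩]; omega
  have hkp : kplus i (fullC n) = (n + 1 - i).toNat := by
    apply nat_sInf_eq
    · show fullC n _ = 1
      simp only [fullC]; rw [if_neg]; omega
    · intro m hm
      simp only [Kp, Set.mem_setOf_eq, fullC] at hm
      split_ifs at hm <;> omega
  have hkm : kminus i (fullC n) = (n + 1 + i).toNat := by
    apply nat_sInf_eq
    · constructor
      · omega
      · show fullC n _ = 1
        simp only [fullC]; rw [if_neg]; omega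
    · intro m hm
      simp only [Km, Set.mem_setOf_eq, fullC] at hm
      obtain ⟨hm0, hm⟩ := hm
      split_ifs at hm <;> omega
  have hKp : (Kp i (fullC n)).Nonempty := ⟨(n + 1 - i).toNat, by
    show fullC n _ = 1; simp only [fullC]; rw [if_neg]; omega⟩
  have hKm : (Km i (fullC n)).Nonempty := ⟨(n + 1 + i).toNat, ⟨by omega, by
    show fullC n _ = 1; simp only [fullC]; rw [if_neg]; omega⟩⟩
  unfold Tn
  rw [restrict_full]
  unfold T
  rw [if_neg hne, if_pos hKp, if_pos hKm, hkp, hkm]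
  funext x
  simp only [restrictN, oneC, fullC, e, Pi.add_apply, Pi.sub_apply]
  split_ifs <;> omega

lemma Tn_one_self {n : ℕ} {a : ℤ} (ha1 : -(n : ℤ) ≤ a) (ha2 : a ≤ n) :
    Tn n a (oneC n a) = fullC n := by
  have h1 : oneC n a a = 1 := by simp [oneC]
  unfold Tn
  rw [restrict_one ha1 ha2]
  unfold T
  rw [if_pos h1]
  funext x
  simp only [restrictN, oneC, fullC, e, Pi.add_apply]
  split_ifs <;> omega

lemma Tn_one {n : ℕ} {a i : ℤ} (ha1 : -(n : ℤ) ≤ a) (ha2 : a ≤ n)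
    (hi1 : -(n : ℤ) ≤ i) (hi2 : i ≤ n) (hne : i ≠ a) :
    Tn n i (oneC n a) = oneC n (a - i + if i < a then -((n : ℤ)+1) else (n : ℤ)+1) := by
  have hni : ¬ oneC n a i = 1 := by
    simp only [oneC, fullC]; rw [if_neg hne, if_pos ⟨hi1, hi2⟩]; omega
  rcases lt_or_gt_of_ne hne with hlt | hgt
  · -- i < a : kplus = a - i, kminus = n+1+i
    have hkp : kplus i (oneC n a) = (a - i).toNat := by
      apply nat_sInf_eq
      · show oneC n a _ = 1
        simp only [oneC, fullC]; rw [if_pos (by omega)]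
      · intro m hm
        simp only [Kp, Set.mem_setOf_eq, oneC, fullC] at hm
        split_ifs at hm <;> omega
    have hkm : kminus i (oneC n a) = (n + 1 + i).toNat := by
      apply nat_sInf_eq
      · refine ⟨by omega, ?_⟩
        show oneC n a _ = 1
        simp only [oneC, fullC]; rw [if_neg (by omega), if_neg (by omega)]
      · intro m hm
        obtain ⟨hm0, hm⟩ := hm
        simp only [oneC, fullC] at hm
        split_ifs at hm <;> omega
    have hKp : (Kp i (oneC n a)).Nonempty := ⟨(a - i).toNat, by
      show oneC n a _ = 1; simp only [oneC, fullC]; rw [if_pos (by omega)]⟩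
    have hKm : (Km i (oneC n a)).Nonempty := ⟨(n + 1 + i).toNat, ⟨by omega, by
      show oneC n a _ = 1; simp only [oneC, fullC]; rw [if_neg (by omega), if_neg (by omega)]⟩⟩
    unfold Tn
    rw [restrict_one ha1 ha2]
    unfold T
    rw [if_neg hni, if_pos hKp, if_pos hKm, hkp, hkm, if_pos hlt]
    funext x
    simp only [restrictN, oneC, fullC, e, Pi.add_apply, Pi.sub_apply]
    split_ifs <;> omega
  · -- i > a : kplus = n+1-i, kminus = i - a
    have hkp : kplus i (oneC n a) = (n + 1 - i).toNat := by
      apply nat_sInf_eq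
      · show oneC n a _ = 1
        simp only [oneC, fullC]; rw [if_neg (by omega), if_neg (by omega)]
      · intro m hm
        simp only [Kp, Set.mem_setOf_eq, oneC, fullC] at hm
        split_ifs at hm <;> omega
    have hkm : kminus i (oneC n a) = (i - a).toNat := by
      apply nat_sInf_eq
      · refine ⟨by omega, ?_⟩
        show oneC n a _ = 1
        simp only [oneC, fullC]; rw [if_pos (by omega)]
      · intro m hm
        obtain ⟨hm0, hm⟩ := hm
        simp only [oneC, fullC] at hm
        split_ifs at hm <;> omega
    have hKp : (Kp i (oneC n a)).Nonempty := ⟨(n + 1 - i).toNat, by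
      show oneC n a _ = 1; simp only [oneC, fullC]; rw [if_neg (by omega), if_neg (by omega)]⟩
    have hKm : (Km i (oneC n a)).Nonempty := ⟨(i - a).toNat, ⟨by omega, by
      show oneC n a _ = 1; simp only [oneC, fullC]; rw [if_pos (by omega)]⟩⟩
    unfold Tn
    rw [restrict_one ha1 ha2]
    unfold T
    rw [if_neg hni, if_pos hKp, if_pos hKm, hkp, hkm, if_neg (by omega : ¬ i < a)]
    funext x
    simp only [restrictN, oneC, fullC, e, Pi.add_apply, Pi.sub_apply]
    split_ifs <;> omega

lemma Tn_invol {n : ℕ} {η : ℤ → ℤ} (hη : Rec n η) {i : ℤ} (hi1 : -(n : ℤ) ≤ i)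
    (hi2 : i ≤ n) : Rec n (Tn n i η) ∧ Tn n (-i) (Tn n i η) = η := by
  rcases rec_cases hη with rfl | ⟨a, ⟨ha1, ha2⟩, rfl⟩
  · rw [Tn_full hi1 hi2]
    refine ⟨rec_one (by omega) (by omega), ?_⟩
    exact Tn_one_self (n := n) (a := -i) (by omega) (by omega)
  · by_cases hia : i = a
    · subst hia
      rw [Tn_one_self ha1 ha2]
      refine ⟨rec_full n, ?_⟩
      rw [Tn_full (by omega) (by omega), neg_neg]
    · rcases lt_or_gt_of_ne hia with hlt | hgt
      · rw [Tn_one ha1 ha2 hi1 hi2 hia, if_pos hlt]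
        refine ⟨rec_one (by omega) (by omega), ?_⟩
        rw [Tn_one (by omega) (by omega) (by omega) (by omega) (by omega),
          if_neg (by omega)]
        have h : a - i + -((n : ℤ) + 1) - -i + ((n : ℤ) + 1) = a := by ring
        rw [h]
      · rw [Tn_one ha1 ha2 hi1 hi2 hia, if_neg (by omega)]
        refine ⟨rec_one (by omega) (by omega), ?_⟩
        rw [Tn_one (by omega) (by omega) (by omega) (by omega) (by omega),
          if_pos (by omega)]
        have h : a - i + ((n : ℤ) + 1) - -i + -((n : ℤ) + 1) = a := by ring
        rw [h]


/-- the uniform measure `μ_n` on the recurrent set `𝓡_n` is reversible for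
the finite-volume generator `𝓛_n f (η) = Σ_{i=-n}^n [f (T_{n,i} η) − f η]`:
`∫ (𝓛_n f) g dμ_n = ∫ f (𝓛_n g) dμ_n` for all `f, g`. -/
theorem uniform_reversible (n : ℕ) (R : Finset (ℤ → ℤ)) (hR : ∀ η, η ∈ R ↔ Rec n η)
    (f g : (ℤ → ℤ) → ℝ) :
    (1 / (R.card : ℝ)) *
        ∑ η ∈ R, (∑ i ∈ Finset.Icc (-(n : ℤ)) (n : ℤ), (f (Tn n i η) - f η)) * g η =
      (1 / (R.card : ℝ)) *
        ∑ η ∈ R, f η * ∑ i ∈ Finset.Icc (-(n : ℤ)) (n : ℤ), (g (Tn n i η) - g η) := by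
  congr 1
  set I := Finset.Icc (-(n : ℤ)) (n : ℤ) with hI
  have hkey : ∀ η ∈ R, ∀ i ∈ I, Tn n i η ∈ R ∧ Tn n (-i) (Tn n i η) = η ∧ -i ∈ I := by
    intro η hη i hi
    rw [hI, Finset.mem_Icc] at hi
    obtain ⟨h1, h2⟩ := Tn_invol ((hR η).1 hη) hi.1 hi.2
    exact ⟨(hR _).2 h1, h2, by rw [hI, Finset.mem_Icc]; omega⟩
  have main : ∑ η ∈ R, ∑ i ∈ I, f (Tn n i η) * g η
      = ∑ η ∈ R, ∑ i ∈ I, f η * g (Tn n i η) := by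
    rw [← Finset.sum_product' (f := fun η i => f (Tn n i η) * g η),
        ← Finset.sum_product' (f := fun η i => f η * g (Tn n i η))]
    refine Finset.sum_nbij' (i := fun p => (Tn n p.2 p.1, -p.2))
      (j := fun p => (Tn n p.2 p.1, -p.2)) ?_ ?_ ?_ ?_ ?_
    · intro p hp
      rw [Finset.mem_product] at hp ⊢
      exact ⟨(hkey _ hp.1 _ hp.2).1, (hkey _ hp.1 _ hp.2).2.2⟩
    · intro p hp
      rw [Finset.mem_product] at hp ⊢
      exact ⟨(hkey _ hp.1 _ hp.2).1, (hkey _ hp.1 _ hp.2).2.2⟩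
    · intro p hp
      rw [Finset.mem_product] at hp
      have := (hkey _ hp.1 _ hp.2).2.1
      simp only [this, neg_neg]
    · intro p hp
      rw [Finset.mem_product] at hp
      have := (hkey _ hp.1 _ hp.2).2.1
      simp only [this, neg_neg]
    · intro p hp
      rw [Finset.mem_product] at hp
      have := (hkey _ hp.1 _ hp.2).2.1
      simp only [this]
  calc ∑ η ∈ R, (∑ i ∈ I, (f (Tn n i η) - f η)) * g η
      = ∑ η ∈ R, (∑ i ∈ I, f (Tn n i η) * g η - ∑ i ∈ I, f η * g η) := by
        refine Finset.sum_congr rfl fun η _ => ?_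
        rw [Finset.sum_mul, ← Finset.sum_sub_distrib]
        exact Finset.sum_congr rfl fun i _ => sub_mul _ _ _
    _ = ∑ η ∈ R, ∑ i ∈ I, f (Tn n i η) * g η - ∑ η ∈ R, ∑ i ∈ I, f η * g η :=
        Finset.sum_sub_distrib _ _
    _ = ∑ η ∈ R, ∑ i ∈ I, f η * g (Tn n i η) - ∑ η ∈ R, ∑ i ∈ I, f η * g η := by
        rw [main]
    _ = ∑ η ∈ R, (∑ i ∈ I, f η * g (Tn n i η) - ∑ i ∈ I, f η * g η) :=
        (Finset.sum_sub_distrib _ _).symm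
    _ = ∑ η ∈ R, f η * ∑ i ∈ I, (g (Tn n i η) - g η) := by
        refine Finset.sum_congr rfl fun η _ => ?_
        rw [Finset.mul_sum, ← Finset.sum_sub_distrib]
        exact Finset.sum_congr rfl fun i _ => (mul_sub _ _ _).symm
end
end

section
/- Let η : ℤ → ℕ (ℕ = positive naturals) with η(i) ≥ 1 everywhere and η(i) = 1 for i ∉ [−n,n], and suppose Σ_{i=−⌊n/2⌋}^{⌊n/2⌋} η(i) ≥ 12n. Then the stabilization θ_n(η) obtained by repeatedly toppling all unstable sites in [−n,n] (a site i ∈ [−n,n] with height > 2 gives one grain to each neighbour; grains arriving outside [−n,n] are lost) yields a recurrent configuration: θ_n(η) ∈ 𝓡_n, i.e. at most one site i ∈ [−n,n] has θ_n(η)(i) = 1. -/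
section AuxLemmas

open Finset

lemma Icc_succ_top' {a b : ℤ} (h : a ≤ b + 1) :
    Finset.Icc a (b+1) = insert (b+1) (Finset.Icc a b) := by
  ext x; simp only [mem_Icc, mem_insert]; omega

lemma notmem_top {a b : ℤ} : (b+1) ∉ Finset.Icc a b := by
  simp only [mem_Icc]; omega

lemma sum_tel (g : ℤ → ℤ) (a : ℤ) : ∀ b, a - 1 ≤ b →
    ∑ i ∈ Finset.Icc a b, (g i - g (i-1)) = g b - g (a-1) := by
  refine Int.le_induction ?_ ?_
  · rw [Finset.Icc_eq_empty (by omega)]; simp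
  · intro b hb ih
    rw [Icc_succ_top' (by omega), Finset.sum_insert notmem_top, ih]
    have h1 : b + 1 - 1 = b := by ring
    rw [h1]; ring

lemma sum_I2 (u : ℤ → ℤ) (a : ℤ) : ∀ b, a - 1 ≤ b →
    ∑ i ∈ Finset.Icc a b, (i - a + 1) * (u (i-1) + u (i+1) - 2 * u i)
      = (b - a + 1) * (u (b+1) - u b) - (u a - u (a-1)) - u b + u a := by
  refine Int.le_induction ?_ ?_
  · rw [Finset.Icc_eq_empty (by omega)]
    simp only [Finset.sum_empty]
    have h1 : a - 1 + 1 = a := by ring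
    rw [h1]; ring
  · intro b hb ih
    rw [Icc_succ_top' (by omega), Finset.sum_insert notmem_top, ih]
    have h1 : b + 1 - 1 = b := by ring
    have h2 : b + 1 + 1 = b + 2 := by ring
    rw [h1, h2]; ring

lemma sum_T3 (a : ℤ) : ∀ b, a - 1 ≤ b →
    2 * ∑ i ∈ Finset.Icc a b, (i - a + 1) = (b - a + 1) * (b - a + 2) := by
  refine Int.le_induction ?_ ?_
  · rw [Finset.Icc_eq_empty (by omega)]; simp
  · intro b hb ih
    rw [Icc_succ_top' (by omega), Finset.sum_insert notmem_top, mul_add, ih]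
    ring

lemma sum_one' (a : ℤ) : ∀ b, a - 1 ≤ b →
    ∑ i ∈ Finset.Icc a b, (1:ℤ) = b + 1 - a := by
  refine Int.le_induction ?_ ?_
  · rw [Finset.Icc_eq_empty (by omega)]; simp
  · intro b hb ih
    rw [Icc_succ_top' (by omega), Finset.sum_insert notmem_top, ih]; ring

/-- One-sided dissipation bound: if `u p = 0` then the `η`-excess in the middle
interval strictly to the right of `p` is small. -/
lemma side_bound (n : ℕ) (η u ζ : ℤ → ℤ) (m p : ℤ)
    (hm0 : 0 ≤ m) (hmn : m ≤ (n:ℤ))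
    (hu0 : ∀ i, 0 ≤ u i)
    (husupp : ∀ i : ℤ, ¬(-(n:ℤ) ≤ i ∧ i ≤ (n:ℤ)) → u i = 0)
    (hζ : ∀ i, ζ i = η i + u (i-1) + u (i+1) - 2 * u i)
    (hge : ∀ i, 1 ≤ η i)
    (hst : ∀ i : ℤ, -(n:ℤ) ≤ i → i ≤ (n:ℤ) → ζ i ≤ 2)
    (hpl : -(n:ℤ) ≤ p) (hpr : p ≤ (n:ℤ)) (hup : u p = 0) :
    2*((n:ℤ)+1-m) * (∑ i ∈ (Finset.Icc (-m) m).filter (p < ·), (η i - 1))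
      ≤ (2*(n:ℤ)+1)*(2*(n:ℤ)+2) := by
  set N : ℤ := (n:ℤ) with hN
  have hupp : u (p+1) ≤ 1 := by
    have h1 := hst p hpl hpr
    have h2 := hζ p
    have h3 := hu0 (p-1)
    have h4 := hge p
    omega
  have huN1 : u (N+1) = 0 := husupp _ (by omega)
  -- the Green identity
  have key : ∑ i ∈ Finset.Icc (p+1) N, (N+1-i) * (ζ i - η i)
      = -(N-p+1) * u (p+1) := by
    have e1 : ∀ i ∈ Finset.Icc (p+1) N, (N+1-i) * (ζ i - η i)
        = (N-p+1) * (((fun j => u (j+1) - u j) i) - ((fun j => u (j+1) - u j) (i-1)))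
          - (i - (p+1) + 1) * (u (i-1) + u (i+1) - 2 * u i) := by
      intro i _
      simp only
      rw [hζ i]
      have h1 : i - 1 + 1 = i := by ring
      rw [h1]; ring
    rw [Finset.sum_congr rfl e1, Finset.sum_sub_distrib, ← Finset.mul_sum,
      sum_tel _ _ _ (by omega), sum_I2 _ _ _ (by omega)]
    have h1 : p + 1 - 1 = p := by ring
    rw [h1, huN1, hup]
    ring
  -- lower bound for the LHS of key
  have hlb : -(N-p+1) ≤ ∑ i ∈ Finset.Icc (p+1) N, (N+1-i) * (ζ i - η i) := by
    rw [key]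
    have : (N-p+1) * u (p+1) ≤ (N-p+1) * 1 := by
      apply mul_le_mul_of_nonneg_left hupp (by omega)
    linarith
  -- upper bound
  have hub : ∑ i ∈ Finset.Icc (p+1) N, (N+1-i) * (ζ i - η i)
      ≤ ∑ i ∈ Finset.Icc (p+1) N, ((N+1-i) - (N+1-i) * (η i - 1)) := by
    apply Finset.sum_le_sum
    intro i hi
    simp only [mem_Icc] at hi
    have h1 : ζ i ≤ 2 := hst i (by omega) (by omega)
    have h2 : (N+1-i) * (ζ i - η i) ≤ (N+1-i) * (2 - η i) :=
      mul_le_mul_of_nonneg_left (by omega) (by omega)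
    have h3 : (N+1-i) * (2 - η i) = (N+1-i) - (N+1-i) * (η i - 1) := by ring
    omega
  have hsplit : ∑ i ∈ Finset.Icc (p+1) N, ((N+1-i) - (N+1-i) * (η i - 1))
      = (∑ i ∈ Finset.Icc (p+1) N, (N+1-i))
        - ∑ i ∈ Finset.Icc (p+1) N, (N+1-i) * (η i - 1) :=
    Finset.sum_sub_distrib _ _
  -- triangle sum
  have hT : 2 * ∑ i ∈ Finset.Icc (p+1) N, (N+1-i) = (N-p)*(N-p+1) := by
    have e2 : ∀ i ∈ Finset.Icc (p+1) N, (N+1-i)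
        = (N-p+1) * 1 - (i - (p+1) + 1) := by
      intro i _; ring
    rw [Finset.sum_congr rfl e2, Finset.sum_sub_distrib, ← Finset.mul_sum,
      sum_one' _ _ (by omega)]
    have := sum_T3 (p+1) N (by omega)
    have h1 : N - (p+1) + 1 = N - p := by ring
    have h2 : N - (p+1) + 2 = N - p + 1 := by ring
    rw [h1, h2] at this
    linear_combination -this
  -- weight bound for the middle-mass sum
  have hB : (N+1-m) * (∑ i ∈ (Finset.Icc (-m) m).filter (p < ·), (η i - 1))
      ≤ ∑ i ∈ Finset.Icc (p+1) N, (N+1-i) * (η i - 1) := by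
    rw [Finset.mul_sum]
    calc ∑ i ∈ (Finset.Icc (-m) m).filter (p < ·), (N+1-m) * (η i - 1)
        ≤ ∑ i ∈ (Finset.Icc (-m) m).filter (p < ·), (N+1-i) * (η i - 1) := by
          apply Finset.sum_le_sum
          intro i hi
          simp only [mem_filter, mem_Icc] at hi
          exact mul_le_mul_of_nonneg_right (by omega) (by have := hge i; omega)
      _ ≤ ∑ i ∈ Finset.Icc (p+1) N, (N+1-i) * (η i - 1) := by
          apply Finset.sum_le_sum_of_subset_of_nonneg
          · intro i hi
            simp only [mem_filter, mem_Icc] at hi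
            simp only [mem_Icc]
            omega
          · intro i hi _
            simp only [mem_Icc] at hi
            have h5 := hge i
            exact mul_nonneg (by omega) (by omega)
  -- combine
  have hBnn : 0 ≤ ∑ i ∈ (Finset.Icc (-m) m).filter (p < ·), (η i - 1) :=
    Finset.sum_nonneg (fun i _ => by have := hge i; omega)
  set B := ∑ i ∈ (Finset.Icc (-m) m).filter (p < ·), (η i - 1) with hBdef
  have hq1 : 0 ≤ N - p := by omega
  have hq2 : N - p ≤ 2*N := by omega
  nlinarith [hlb, hub, hsplit, hT, hB, hBnn, hq1, hq2]

/-- Every site of `[-n,n]` topples at least once. -/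
lemma all_topple (n : ℕ) (η u ζ : ℤ → ℤ) (hn : 1 ≤ n)
    (hu0 : ∀ i, 0 ≤ u i)
    (husupp : ∀ i : ℤ, ¬(-(n:ℤ) ≤ i ∧ i ≤ (n:ℤ)) → u i = 0)
    (hζ : ∀ i, ζ i = η i + u (i-1) + u (i+1) - 2 * u i)
    (hge : ∀ i, 1 ≤ η i)
    (hst : ∀ i : ℤ, -(n:ℤ) ≤ i → i ≤ (n:ℤ) → ζ i ≤ 2)
    (hsum : (12 * n : ℤ) ≤ ∑ i ∈ Finset.Icc (-((n / 2 : ℕ) : ℤ)) ((n / 2 : ℕ) : ℤ), η i)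
    (p : ℤ) (hpl : -(n:ℤ) ≤ p) (hpr : p ≤ (n:ℤ)) : 1 ≤ u p := by
  by_contra hup'
  have hup : u p = 0 := by have := hu0 p; omega
  set N : ℤ := (n:ℤ) with hN
  set m : ℤ := ((n / 2 : ℕ) : ℤ) with hm
  have hm0 : 0 ≤ m := by positivity
  have hm2 : 2 * m ≤ N := by
    have : (n/2 : ℕ) * 2 ≤ n := Nat.div_mul_le_self n 2
    omega
  have hmn : m ≤ N := by omega
  have hNn : 1 ≤ N := by omega
  have hηp : η p ≤ 2 := by
    have h1 := hst p hpl hpr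
    have h2 := hζ p
    have h3 := hu0 (p-1)
    have h4 := hu0 (p+1)
    have h5 := hge p
    omega
  -- total middle excess
  have hcard : ∑ i ∈ Finset.Icc (-m) m, (1:ℤ) = 2*m + 1 := by
    rw [sum_one' _ _ (by omega)]; ring
  have hexc : 12*N - 2*m - 1 ≤ ∑ i ∈ Finset.Icc (-m) m, (η i - 1) := by
    rw [Finset.sum_sub_distrib, hcard]
    omega
  -- split the middle excess at p
  set A := ∑ i ∈ (Finset.Icc (-m) m).filter (· < p), (η i - 1) with hA
  set B := ∑ i ∈ (Finset.Icc (-m) m).filter (p < ·), (η i - 1) with hB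
  have hABsplit : ∑ i ∈ Finset.Icc (-m) m, (η i - 1) ≤ A + B + 1 := by
    rw [← Finset.sum_filter_add_sum_filter_not (Finset.Icc (-m) m) (· < p) (fun i => η i - 1)]
    have h2 : ∑ i ∈ (Finset.Icc (-m) m).filter (fun i => ¬ i < p), (η i - 1)
        ≤ B + 1 := by
      rw [← Finset.sum_filter_add_sum_filter_not
        ((Finset.Icc (-m) m).filter (fun i => ¬ i < p)) (fun i => p < i) (fun i => η i - 1)]
      have e1 : ((Finset.Icc (-m) m).filter (fun i => ¬ i < p)).filter (fun i => p < i)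
          = (Finset.Icc (-m) m).filter (p < ·) := by
        rw [Finset.filter_filter]
        apply Finset.filter_congr
        intro x _
        constructor
        · rintro ⟨_, h⟩; exact h
        · intro h; exact ⟨by omega, h⟩
      have e2 : ∑ i ∈ ((Finset.Icc (-m) m).filter (fun i => ¬ i < p)).filter
            (fun i => ¬ p < i), (η i - 1) ≤ 1 := by
        calc _ ≤ ∑ i ∈ ({p} : Finset ℤ), (η i - 1) := by
              apply Finset.sum_le_sum_of_subset_of_nonneg
              · intro i hi
                simp only [mem_filter, mem_Icc] at hi
                simp only [mem_singleton]
                omega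
              · intro i _ _
                have := hge i; omega
          _ ≤ 1 := by rw [Finset.sum_singleton]; omega
      rw [e1]
      omega
    omega
  have hAB : 11*N - 2 ≤ A + B := by omega
  have hAnn : 0 ≤ A := Finset.sum_nonneg (fun i _ => by have := hge i; omega)
  have hBnn : 0 ≤ B := Finset.sum_nonneg (fun i _ => by have := hge i; omega)
  -- the side with more mass gives the contradiction
  rcases le_or_gt (11*N - 2) (2*B) with hside | hside
  · -- right side
    have hkey := side_bound n η u ζ m p hm0 hmn hu0 husupp hζ hge hst hpl hpr hup
    rw [← hB, ← hN] at hkey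
    nlinarith [hkey, hside, hBnn, hm2, hNn]
  · -- left side: reflect
    have hside' : 11*N - 2 ≤ 2*A := by omega
    have hkey := side_bound n (fun i => η (-i)) (fun i => u (-i)) (fun i => ζ (-i)) m (-p)
      hm0 hmn (fun i => hu0 (-i))
      (fun i hi => husupp (-i) (by omega))
      (fun i => by
        show ζ (-i) = η (-i) + u (-(i-1)) + u (-(i+1)) - 2 * u (-i)
        rw [show -(i-1) = -i+1 by ring, show -(i+1) = -i-1 by ring, hζ (-i)]
        ring)
      (fun i => hge (-i))
      (fun i h1 h2 => hst (-i) (by omega) (by omega))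
      (by omega) (by omega) (by simpa using hup)
    rw [← hN] at hkey
    have hrefl : ∑ i ∈ (Finset.Icc (-m) m).filter (-p < ·), (η (-i) - 1) = A := by
      rw [hA]
      refine Finset.sum_bij' (fun i _ => -i) (fun i _ => -i) ?_ ?_ ?_ ?_ ?_
      · intro a ha; simp only [mem_filter, mem_Icc] at ha ⊢; omega
      · intro a ha; simp only [mem_filter, mem_Icc] at ha ⊢; omega
      · intro a ha; simp
      · intro a ha; simp
      · intro a ha; simp
    rw [hrefl] at hkey
    nlinarith [hkey, hside', hAnn, hm2, hNn]


/-- local bound for "forbidden subconfigurations" on the interval `[x,y]`: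
the number of neighbours of `i` inside `[x,y]`. -/
def bd (x y i : ℤ) : ℤ := (if x < i then 1 else 0) + (if i < y then 1 else 0)

end AuxLemmas

noncomputable section

/-- One toppling step of the finite-volume sandpile on `[-n,n]` with open boundary:
an unstable site `i ∈ [-n,n]` (height `> 2`) loses two grains, giving one to each of its
neighbours `i−1, i+1` (grains arriving outside `[-n,n]` are irrelevant/lost). -/
def ToppleStep (n : ℕ) (η ζ : ℤ → ℤ) : Prop :=
  ∃ i : ℤ, i ∈ Finset.Icc (-(n : ℤ)) (n : ℤ) ∧ 2 < η i ∧
    ζ = fun x => if x = i then η x - 2 else if x = i - 1 ∨ x = i + 1 then η x + 1 else η x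

/-- Lemma 5.1: let `η : ℤ → ℤ` be a height configuration with `η i ≥ 1`
everywhere and `η i = 1` off `[-n,n]`, and suppose
`Σ_{i=-⌊n/2⌋}^{⌊n/2⌋} η i ≥ 12n`.  Then the stabilization `θ_n(η)` — i.e. any stable
configuration `ζ` (all heights `≤ 2` on `[-n,n]`) reached from `η` by repeatedly toppling
unstable sites in `[-n,n]` — is recurrent: `Σ_{i=-n}^n (2 − ζ i) ≤ 1`, i.e. at most one
site of `[-n,n]` has height `1`. -/
theorem stabilization_recurrent (n : ℕ) (η ζ : ℤ → ℤ)
    (hge : ∀ i, 1 ≤ η i)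
    (hout : ∀ i : ℤ, i ∉ Finset.Icc (-(n : ℤ)) (n : ℤ) → η i = 1)
    (hsum : (12 * n : ℤ) ≤ ∑ i ∈ Finset.Icc (-((n / 2 : ℕ) : ℤ)) ((n / 2 : ℕ) : ℤ), η i)
    (hreach : Relation.ReflTransGen (ToppleStep n) η ζ)
    (hstable : ∀ i ∈ Finset.Icc (-(n : ℤ)) (n : ℤ), ζ i ≤ 2) :
    (∑ i ∈ Finset.Icc (-(n : ℤ)) (n : ℤ), (2 - ζ i)) ≤ 1 := by
  classical
  -- Invariant carried along the toppling dynamics: an odometer `u` with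
  -- nonnegativity, support in the box, the discrete-Laplacian identity,
  -- heights ≥ 1, and "no forbidden interval inside the set of toppled sites".
  have key : ∀ ξ : ℤ → ℤ, Relation.ReflTransGen (ToppleStep n) η ξ →
      ∃ u : ℤ → ℤ, (∀ i, 0 ≤ u i) ∧
        (∀ i : ℤ, ¬(-(n:ℤ) ≤ i ∧ i ≤ (n:ℤ)) → u i = 0) ∧
        (∀ i, ξ i = η i + u (i-1) + u (i+1) - 2 * u i) ∧
        (∀ i, 1 ≤ ξ i) ∧
        (∀ x y : ℤ, x ≤ y → (∀ i, x ≤ i → i ≤ y → 1 ≤ u i) →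
          ∃ i, x ≤ i ∧ i ≤ y ∧ bd x y i < ξ i) := by
    intro ξ hre
    induction hre with
    | refl =>
      refine ⟨fun _ => 0, fun i => le_refl 0, fun i _ => rfl, fun i => by simp, hge, ?_⟩
      intro x y hxy hsupp
      exact absurd (hsupp x (le_refl x) hxy) (by norm_num)
    | @tail b c hb hstep ih =>
      obtain ⟨u, hu0, hus, hub, hb1, hbD⟩ := ih
      obtain ⟨i0, hi0, hgt, rfl⟩ := hstep
      simp only [Finset.mem_Icc] at hi0
      refine ⟨fun x => if x = i0 then u x + 1 else u x, ?_, ?_, ?_, ?_, ?_⟩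
      · intro i
        by_cases h : i = i0 <;> simp [h] <;> [linarith [hu0 i0]; exact hu0 i]
      · intro i hi
        have : i ≠ i0 := by omega
        simp only [if_neg this]
        exact hus i hi
      · intro x
        dsimp only
        by_cases h1 : x = i0
        · subst h1
          rw [if_pos rfl, if_neg (show ¬ (x - 1 = x) by omega),
            if_neg (show ¬ (x + 1 = x) by omega), if_pos rfl, hub x]
          ring
        · by_cases h2 : x = i0 - 1
          · rw [if_neg h1, if_pos (Or.inl h2),
              if_neg (show ¬ (x - 1 = i0) by omega), if_pos (show x + 1 = i0 by omega),
              if_neg h1, hub x]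
            ring
          · by_cases h3 : x = i0 + 1
            · rw [if_neg h1, if_pos (Or.inr h3),
                if_pos (show x - 1 = i0 by omega), if_neg (show ¬ (x + 1 = i0) by omega),
                if_neg h1, hub x]
              ring
            · rw [if_neg h1, if_neg (show ¬(x = i0 - 1 ∨ x = i0 + 1) by omega),
                if_neg (show ¬ (x - 1 = i0) by omega), if_neg (show ¬ (x + 1 = i0) by omega),
                if_neg h1]
              exact hub x
      · intro x
        by_cases h1 : x = i0
        · simp only [if_pos h1]
          have := hb1 x
          subst h1; omega
        · by_cases h4 : x = i0 - 1 ∨ x = i0 + 1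
          · simp only [if_neg h1, if_pos h4]
            have := hb1 x; omega
          · simp only [if_neg h1, if_neg h4]
            exact hb1 x
      · intro x y hxy hsupp
        by_cases hc : x ≤ i0 ∧ i0 ≤ y
        · -- the toppled site lies in the interval
          rcases eq_or_lt_of_le hc.1 with he | hlt
          · rcases eq_or_lt_of_le hc.2 with he2 | hlt2
            · -- x = i0 = y : singleton
              refine ⟨i0, by omega, by omega, ?_⟩
              have hbd : bd x y i0 = 0 := by
                unfold bd
                rw [if_neg (by omega), if_neg (by omega)]
                ring
              rw [hbd]
              simp only [if_pos rfl]
              have := hgt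
              omega
            · -- x = i0 < y : use the invariant on [x+1, y]
              obtain ⟨i, hi1, hi2, hlt3⟩ := hbD (x+1) y (by omega) (fun i hA hB => by
                have h := hsupp i (by omega) (by omega)
                simpa [show ¬ i = i0 by omega] using h)
              refine ⟨i, by omega, by omega, ?_⟩
              have hne : ¬ i = i0 := by omega
              have hne2 : ¬ i = i0 - 1 := by omega
              unfold bd at hlt3 ⊢
              by_cases hme : i = i0 + 1
              · simp only [if_neg hne, if_pos (Or.inr hme)] at *
                rw [if_pos (show x < i by omega)]
                rw [if_neg (show ¬ x + 1 < i by omega)] at hlt3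
                omega
              · simp only [if_neg hne, if_neg (show ¬(i = i0 - 1 ∨ i = i0 + 1) by tauto)]
                rw [if_pos (show x < i by omega)]
                rw [if_pos (show x + 1 < i by omega)] at hlt3
                omega
          · -- x < i0 ≤ y : use the invariant on [x, i0-1]
            obtain ⟨i, hi1, hi2, hlt3⟩ := hbD x (i0-1) (by omega) (fun i hA hB => by
              have h := hsupp i (by omega) (by omega)
              simpa [show ¬ i = i0 by omega] using h)
            refine ⟨i, by omega, by omega, ?_⟩
            have hne : ¬ i = i0 := by omega
            have hne2 : ¬ i = i0 + 1 := by omega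
            unfold bd at hlt3 ⊢
            by_cases hme : i = i0 - 1
            · simp only [if_neg hne, if_pos (Or.inl hme)] at *
              rw [if_pos (show i < y by omega)]
              rw [if_neg (show ¬ i < i0 - 1 by omega)] at hlt3
              omega
            · simp only [if_neg hne, if_neg (show ¬(i = i0 - 1 ∨ i = i0 + 1) by tauto)]
              rw [if_pos (show i < y by omega)]
              rw [if_pos (show i < i0 - 1 by omega)] at hlt3
              omega
        · -- the toppled site is outside the interval: heights inside only grew
          obtain ⟨i, hi1, hi2, hlt3⟩ := hbD x y hxy (fun i hA hB => by
            have h := hsupp i hA hB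
            simpa [show ¬ i = i0 by omega] using h)
          refine ⟨i, hi1, hi2, ?_⟩
          have hne : ¬ i = i0 := by omega
          by_cases h4 : i = i0 - 1 ∨ i = i0 + 1
          · simp only [if_neg hne, if_pos h4]; omega
          · simp only [if_neg hne, if_neg h4]; omega
  obtain ⟨u, hu0, hus, hζf, hζ1, hD⟩ := key ζ hreach
  have hst' : ∀ i : ℤ, -(n:ℤ) ≤ i → i ≤ (n:ℤ) → ζ i ≤ 2 := by
    intro i h1 h2
    exact hstable i (Finset.mem_Icc.mpr ⟨h1, h2⟩)
  -- main contradiction machinery: no two sites of final height 1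
  have hmain : ∀ a b : ℤ, -(n:ℤ) ≤ a → b ≤ (n:ℤ) → a < b → ζ a = 1 → ζ b = 1 → False := by
    intro a b ha hb hab hζa hζb
    have hn : 1 ≤ n := by omega
    have htop := all_topple n η u ζ hn hu0 hus hζf hge hst' hsum
    obtain ⟨i, hi1, hi2, hlt⟩ := hD a b (le_of_lt hab)
      (fun i h1 h2 => htop i (by omega) (by omega))
    unfold bd at hlt
    rcases eq_or_lt_of_le hi1 with he | h1
    · rw [if_neg (by omega), if_pos (by omega), ← he] at hlt
      omega
    · rcases eq_or_lt_of_le hi2 with he2 | h2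
      · rw [if_pos (by omega), if_neg (by omega), he2] at hlt
        omega
      · rw [if_pos (by omega), if_pos (by omega)] at hlt
        have := hst' i (by omega) (by omega)
        omega
  -- conclude: the deficit sum is the number of height-1 sites, which is ≤ 1
  by_contra hcon
  push_neg at hcon
  set F := (Finset.Icc (-(n:ℤ)) (n:ℤ)).filter (fun i => ζ i = 1) with hF
  have hsum2 : ∑ i ∈ Finset.Icc (-(n:ℤ)) (n:ℤ), (2 - ζ i) = (F.card : ℤ) := by
    rw [← Finset.sum_filter_add_sum_filter_not (Finset.Icc (-(n:ℤ)) (n:ℤ))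
      (fun i => ζ i = 1) (fun i => 2 - ζ i)]
    have e1 : ∀ i ∈ (Finset.Icc (-(n:ℤ)) (n:ℤ)).filter (fun i => ζ i = 1),
        (2 - ζ i) = 1 := by
      intro i hi
      simp only [Finset.mem_filter] at hi
      omega
    have e2 : ∀ i ∈ (Finset.Icc (-(n:ℤ)) (n:ℤ)).filter (fun i => ¬ ζ i = 1),
        (2 - ζ i) = 0 := by
      intro i hi
      simp only [Finset.mem_filter, Finset.mem_Icc] at hi
      have h1 := hζ1 i
      have h2 := hst' i (by omega) (by omega)
      omega
    rw [Finset.sum_congr rfl e1, Finset.sum_congr rfl e2, Finset.sum_const,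
      Finset.sum_const, hF]
    simp
  have hcard : 1 < F.card := by
    rw [hsum2] at hcon
    exact_mod_cast hcon
  obtain ⟨a, ha, b, hb, hab⟩ := Finset.one_lt_card.mp hcard
  simp only [hF, Finset.mem_filter, Finset.mem_Icc] at ha hb
  rcases lt_trichotomy a b with h | h | h
  · exact hmain a b (by omega) (by omega) h ha.2 hb.2
  · exact hab (by omega)
  · exact hmain b a (by omega) (by omega) h hb.2 ha.2
end
end
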